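/- arXiv:2403.03596 — 2 statements merged into one kernel-verified Lean document; each statement's English description precedes it below -/
import Mathlib

section
/- The inclusion of the spine Spine[n] (the simplicial subset of Δⁿ generated by the edges {i, i+1} for 0 ≤ i < n) into Δⁿ is an inner anodyne map of simplicial sets. -/
/-!
STATEMENT 3: The inclusion of the spine `Spine[n] ⊆ Δ[n]` (the simplicial subset
generated by the consecutive edges `{i, i+1}`, `0 ≤ i < n`) is inner anodyne.

Inner anodyne maps form the weakly saturated class generated by the inner horn
inclusions `Λ[n, i] ⟶ Δ[n]` (`0 < i < n`); equivalently (and this is how we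
formalize it, since weak saturation is generation under pushout, transfinite
composition and retracts, i.e. `llp(rlp(inner horns))`), a map is inner anodyne
iff it has the left lifting property against every map having the right lifting
property against all inner horn inclusions.
-/

open CategoryTheory Simplicial SSet Opposite SimplexCategory

namespace SpineAux



/-- minimum of a finset of naturals (junk value 0 on ∅). -/
def mn (A : Finset ℕ) : ℕ := A.min.getD 0

lemma mn_mem {A : Finset ℕ} (h : A.Nonempty) : mn A ∈ A := by
  obtain ⟨a, ha⟩ := h
  obtain ⟨b, hb⟩ := Finset.min_of_mem ha
  have : mn A = b := by rw [mn, hb]; rfl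
  rw [this]
  exact Finset.mem_of_min hb

lemma mn_le {A : Finset ℕ} {a : ℕ} (ha : a ∈ A) : mn A ≤ a := by
  obtain ⟨b, hb⟩ := Finset.min_of_mem ha
  have h1 : mn A = b := by rw [mn, hb]; rfl
  have := Finset.min_le ha
  rw [hb] at this
  exact_mod_cast h1 ▸ this

lemma mn_eq {A : Finset ℕ} {a : ℕ} (ha : a ∈ A) (h : ∀ b ∈ A, a ≤ b) : mn A = a :=
  le_antisymm (mn_le ha) (h _ (mn_mem ⟨a, ha⟩))

def isSpine (A : Finset ℕ) : Prop := ∀ a ∈ A, ∀ b ∈ A, a ≤ b + 1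

def isTop (A : Finset ℕ) : Prop := 3 ≤ A.card ∧ mn A + 1 ∈ A

def isFree (A : Finset ℕ) : Prop := 2 ≤ A.card ∧ mn A + 1 ∉ A

def FF (A : Finset ℕ) : Finset ℕ := A.erase (mn A + 1)

def TT (A : Finset ℕ) : Finset ℕ := insert (mn A + 1) A

lemma top_not_spine {A : Finset ℕ} (h : isTop A) : ¬ isSpine A := by
  intro hs
  obtain ⟨hc, h1⟩ := h
  have hne : A.Nonempty := Finset.card_pos.mp (by omega)
  have hsub : ¬ A ⊆ {mn A, mn A + 1} := by
    intro hsub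
    have h2 := Finset.card_le_card hsub
    have h3 : ({mn A, mn A + 1} : Finset ℕ).card ≤ 2 :=
      (Finset.card_insert_le _ _).trans (by simp)
    omega
  obtain ⟨b, hb, hb2⟩ := Finset.not_subset.mp hsub
  simp only [Finset.mem_insert, Finset.mem_singleton, not_or] at hb2
  have := mn_le hb
  have := hs b hb (mn A) (mn_mem hne)
  omega

lemma free_not_spine {A : Finset ℕ} (h : isFree A) : ¬ isSpine A := by
  intro hs
  obtain ⟨hc, h1⟩ := h
  have hne : A.Nonempty := Finset.card_pos.mp (by omega)
  have h1lt : 1 < A.card := by omega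
  obtain ⟨b, hb, hb2⟩ := Finset.exists_mem_ne h1lt (mn A)
  have hble := mn_le hb
  have hbne : b ≠ mn A + 1 := fun e => h1 (e ▸ hb)
  have := hs b hb (mn A) (mn_mem hne)
  omega

lemma not_spine_classify {A : Finset ℕ} (h : ¬ isSpine A) : isTop A ∨ isFree A := by
  have hne : A.Nonempty := by
    rcases Finset.eq_empty_or_nonempty A with rfl | hne
    · exact absurd (by intro a ha; simp at ha) h
    · exact hne
  by_cases h1 : mn A + 1 ∈ A
  · left
    refine ⟨?_, h1⟩
    by_contra hc
    push_neg at hc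
    apply h
    have hsub : A ⊆ {mn A, mn A + 1} := by
      intro b hb
      by_contra hb2
      simp only [Finset.mem_insert, Finset.mem_singleton, not_or] at hb2
      have h2 : ({mn A, mn A + 1} : Finset ℕ) ⊆ A := by
        intro c hc'
        simp only [Finset.mem_insert, Finset.mem_singleton] at hc'
        rcases hc' with rfl | rfl
        · exact mn_mem hne
        · exact h1
      have hss : ({mn A, mn A + 1} : Finset ℕ).card < A.card := by
        apply Finset.card_lt_card
        exact ⟨h2, fun hc2 => hb2.1 (by
          have := hc2 hb
          simp only [Finset.mem_insert, Finset.mem_singleton] at this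
          rcases this with h' | h'
          · exact h'
          · exact absurd h' hb2.2)⟩
      have : ({mn A, mn A + 1} : Finset ℕ).card = 2 := by
        rw [Finset.card_insert_of_notMem (by simp), Finset.card_singleton]
      omega
    intro a ha b hb
    have ha' := hsub ha
    have hb' := hsub hb
    simp only [Finset.mem_insert, Finset.mem_singleton] at ha' hb'
    rcases ha' with rfl | rfl <;> rcases hb' with h' | h' <;> omega
  · right
    refine ⟨?_, h1⟩
    by_contra hc
    push_neg at hc
    apply h
    have : A = {mn A} := by
      apply Finset.eq_singleton_iff_unique_mem.mpr
      refine ⟨mn_mem hne, fun b hb => ?_⟩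
      by_contra hb2
      have h2 : ({mn A, b} : Finset ℕ) ⊆ A := by
        intro c hc'
        simp only [Finset.mem_insert, Finset.mem_singleton] at hc'
        rcases hc' with rfl | rfl
        · exact mn_mem hne
        · exact hb
      have := Finset.card_le_card h2
      rw [Finset.card_insert_of_notMem (by simp [Ne.symm hb2]), Finset.card_singleton] at this
      omega
    rw [this]
    intro a ha b hb
    simp only [Finset.mem_singleton] at ha hb
    omega

lemma top_not_free {A : Finset ℕ} (h : isTop A) : ¬ isFree A := fun hf => hf.2 h.2

lemma mn_FF {A : Finset ℕ} (h : isTop A) : mn (FF A) = mn A := by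
  obtain ⟨hc, h1⟩ := id h
  have hne : A.Nonempty := Finset.card_pos.mp (by omega)
  apply mn_eq
  · exact Finset.mem_erase.mpr ⟨by omega, mn_mem hne⟩
  · intro b hb
    exact mn_le (Finset.mem_erase.mp hb).2

lemma FF_card {A : Finset ℕ} (h : isTop A) : (FF A).card = A.card - 1 :=
  Finset.card_erase_of_mem h.2

lemma top_FF_free {A : Finset ℕ} (h : isTop A) : isFree (FF A) := by
  obtain ⟨hc, h1⟩ := id h
  constructor
  · rw [FF_card h]; omega
  · rw [mn_FF h]
    exact Finset.notMem_erase _ _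

lemma FF_subset {A : Finset ℕ} : FF A ⊆ A := Finset.erase_subset _ _

lemma FF_ne {A : Finset ℕ} (h : isTop A) : FF A ≠ A := by
  intro he
  have hm : mn A + 1 ∈ FF A := by rw [he]; exact h.2
  exact Finset.notMem_erase _ _ hm

lemma mn_TT {A : Finset ℕ} (hne : A.Nonempty) : mn (TT A) = mn A := by
  apply mn_eq
  · exact Finset.mem_insert_of_mem (mn_mem hne)
  · intro b hb
    rcases Finset.mem_insert.mp hb with rfl | hb
    · omega
    · exact mn_le hb

lemma free_TT_top {A : Finset ℕ} (h : isFree A) : isTop (TT A) := by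
  obtain ⟨hc, h1⟩ := id h
  have hne : A.Nonempty := Finset.card_pos.mp (by omega)
  constructor
  · rw [TT, Finset.card_insert_of_notMem h.2]; omega
  · rw [mn_TT hne]
    exact Finset.mem_insert_self _ _

lemma FF_TT {A : Finset ℕ} (h : isFree A) : FF (TT A) = A := by
  obtain ⟨hc, h1⟩ := id h
  have hne : A.Nonempty := Finset.card_pos.mp (by omega)
  rw [FF, mn_TT hne, TT, Finset.erase_insert h.2]

lemma TT_FF {A : Finset ℕ} (h : isTop A) : TT (FF A) = A := by
  rw [TT, mn_FF h, FF, Finset.insert_erase h.2]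

/-- second element of a free set is ≥ mn + 2 -/
lemma free_second {A : Finset ℕ} (h : isFree A) : ∃ b ∈ A, mn A + 2 ≤ b := by
  obtain ⟨hc, h1⟩ := id h
  have h1lt : 1 < A.card := by omega
  obtain ⟨b, hb, hb2⟩ := Finset.exists_mem_ne h1lt (mn A)
  refine ⟨b, hb, ?_⟩
  have hge := mn_le hb
  have hne2 : b ≠ mn A + 1 := fun e => h.2 (e ▸ hb)
  omega

/-- the facet lemma: a free facet of a top `A` other than `FF A` must be `A` minus its min. -/
lemma facet_mn {A B : Finset ℕ} (hA : isTop A) (hBA : B ⊆ A) (hcard : B.card + 1 = A.card)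
    (hB : isFree B) (hne : B ≠ FF A) : mn B = mn A + 1 := by
  obtain ⟨hAc, hA1⟩ := id hA
  have hAne : A.Nonempty := Finset.card_pos.mp (by omega)
  by_cases hm : mn A ∈ B
  · exfalso
    have hmnB : mn B = mn A := mn_eq hm (fun b hb => mn_le (hBA hb))
    have hsub : B ⊆ FF A := by
      intro b hb
      refine Finset.mem_erase.mpr ⟨?_, hBA hb⟩
      intro he
      exact hB.2 (by rw [hmnB, ← he]; exact hb)
    have : B = FF A := Finset.eq_of_subset_of_card_le hsub (by rw [FF_card hA]; omega)
    exact hne this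
  · have hsub : B ⊆ A.erase (mn A) := fun b hb =>
      Finset.mem_erase.mpr ⟨fun e => hm (e ▸ hb), hBA hb⟩
    have hBe : B = A.erase (mn A) := Finset.eq_of_subset_of_card_le hsub
      (by rw [Finset.card_erase_of_mem (mn_mem hAne)]; omega)
    apply mn_eq
    · rw [hBe]
      exact Finset.mem_erase.mpr ⟨by omega, hA.2⟩
    · intro b hb
      rw [hBe] at hb
      obtain ⟨hb1, hb2⟩ := Finset.mem_erase.mp hb
      have := mn_le hb2
      omega


/-! ### measure and minimality -/

variable (n : ℕ)

/-- the collection of admissible vertex sets inside `{0, ..., n}`. -/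
def Om : Finset (Finset ℕ) := (Finset.range (n + 1)).powerset

lemma mem_Om {A : Finset ℕ} : A ∈ Om n ↔ ∀ a ∈ A, a ≤ n := by
  simp [Om, Finset.subset_iff, Nat.lt_succ_iff]

/-- the ordering measure on tops: attach by increasing cardinality, decreasing min. -/
def mu (A : Finset ℕ) : ℕ := A.card * (n + 2) + (n + 1 - mn A)

lemma mu_lt_of_card_lt {A B : Finset ℕ} (h : B.card < A.card) : mu n B < mu n A := by
  have h1 : mu n B ≤ B.card * (n + 2) + (n + 1) := by unfold mu; omega
  have h2 : (B.card + 1) * (n + 2) ≤ A.card * (n + 2) :=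
    Nat.mul_le_mul_right _ (by omega)
  have h3 : A.card * (n + 2) ≤ mu n A := Nat.le_add_right _ _
  nlinarith

/-- admissibility of a collection of vertex sets. -/
structure Adm (P : Finset ℕ → Prop) : Prop where
  spine : ∀ A, isSpine A → P A
  mono : ∀ ⦃A B : Finset ℕ⦄, B ⊆ A → P A → P B
  pair : ∀ A, isTop A → (P A ↔ P (FF A))

/-- If the complement (within `Om n`) is nonempty, there is a minimal missing top. -/
lemma exists_min_top {P : Finset ℕ → Prop} (hP : Adm P)
    {A : Finset ℕ} (hA : A ∈ Om n) (hnA : ¬ P A) :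
    ∃ A₀ ∈ Om n, isTop A₀ ∧ ¬ P A₀ ∧
      ∀ A' ∈ Om n, isTop A' → ¬ P A' → mu n A₀ ≤ mu n A' := by
  classical
  have htop : ∃ C ∈ Om n, isTop C ∧ ¬ P C := by
    have hns : ¬ isSpine A := fun hs => hnA (hP.spine _ hs)
    rcases not_spine_classify hns with ht | hf
    · exact ⟨A, hA, ht, hnA⟩
    · refine ⟨TT A, ?_, free_TT_top hf, ?_⟩
      · rw [mem_Om]
        intro a ha
        rcases Finset.mem_insert.mp ha with rfl | ha
        · obtain ⟨b, hb, hb2⟩ := free_second hf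
          have := (mem_Om n).mp hA b hb
          omega
        · exact (mem_Om n).mp hA a ha
      · intro hPT
        exact hnA (by have := (hP.pair _ (free_TT_top hf)).mp hPT; rwa [FF_TT hf] at this)
  obtain ⟨C, hC, hCt, hCn⟩ := htop
  set S : Finset (Finset ℕ) := (Om n).filter (fun B => isTop B ∧ ¬ P B) with hS
  have hSne : S.Nonempty := ⟨C, Finset.mem_filter.mpr ⟨hC, hCt, hCn⟩⟩
  obtain ⟨A₀, hA₀, hmin⟩ := Finset.exists_min_image S (mu n) hSne
  obtain ⟨h1, h2, h3⟩ := Finset.mem_filter.mp hA₀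
  exact ⟨A₀, h1, h2, h3, fun A' h1' h2' h3' =>
    hmin A' (Finset.mem_filter.mpr ⟨h1', h2', h3'⟩)⟩

/-- The key combinatorial lemma: all proper subsets of the minimal missing top,
except its free face, are already in `P`. -/
lemma key_lemma {P : Finset ℕ → Prop} (hP : Adm P) {A₀ : Finset ℕ}
    (hA₀ : A₀ ∈ Om n) (htop : isTop A₀) (hnP : ¬ P A₀)
    (hmin : ∀ A' ∈ Om n, isTop A' → ¬ P A' → mu n A₀ ≤ mu n A')
    {B : Finset ℕ} (hBA : B ⊆ A₀) (hne : B ≠ A₀) (hneF : B ≠ FF A₀) : P B := by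
  by_cases hs : isSpine B
  · exact hP.spine _ hs
  have hcard : B.card < A₀.card :=
    Finset.card_lt_card (Finset.ssubset_iff_subset_ne.mpr ⟨hBA, hne⟩)
  have hBO : B ∈ Om n := (mem_Om n).mpr fun a ha => (mem_Om n).mp hA₀ a (hBA ha)
  rcases not_spine_classify hs with ht | hf
  · -- B is a top: minimality forces P B
    by_contra hPB
    exact absurd (hmin B hBO ht hPB) (not_le.mpr (mu_lt_of_card_lt n hcard))
  · -- B is free: consider its top C = TT B
    set C := TT B with hC
    by_cases hPC : P C
    · have := (hP.pair _ (free_TT_top hf)).mp hPC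
      rwa [FF_TT hf] at this
    have hCtop : isTop C := free_TT_top hf
    have hCO : C ∈ Om n := by
      rw [mem_Om]
      intro a ha
      rcases Finset.mem_insert.mp ha with rfl | ha
      · obtain ⟨b, hb, hb2⟩ := free_second hf
        have := (mem_Om n).mp hBO b hb
        omega
      · exact (mem_Om n).mp hBO a ha
    have hge := hmin C hCO hCtop hPC
    have hCcard : C.card = B.card + 1 := by
      rw [hC, TT, Finset.card_insert_of_notMem hf.2]
    exfalso
    rcases lt_or_eq_of_le (by omega : C.card ≤ A₀.card) with hlt | heq
    · exact absurd hge (not_le.mpr (mu_lt_of_card_lt n hlt))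
    · have hmnB : mn B = mn A₀ + 1 := facet_mn htop hBA (by omega) hf hneF
      have hmnC : mn C = mn B := mn_TT (Finset.card_pos.mp (by have := hf.1; omega))
      have hmnA₀ : mn A₀ ≤ n := by
        have h3 : 3 ≤ A₀.card := htop.1
        exact (mem_Om n).mp hA₀ _ (mn_mem (Finset.card_pos.mp (by omega)))
      have : mu n C < mu n A₀ := by
        unfold mu
        rw [heq, hmnC, hmnB]
        omega
      exact absurd hge (not_le.mpr this)





/-- The one-step attachment lemma: if `T` is obtained from `S ≤ T ≤ X` by attaching a single
`m`-simplex `φ` along the inner horn `Λ[m, i]`, then the inclusion `S ⟶ T` has the left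
lifting property against any `p` having the right lifting property against `Λ[m,i] ⟶ Δ[m]`. -/
lemma step {X : SSet.{0}} {S T : Subfunctor X} (hST : S ≤ T)
    (m : ℕ) (i : Fin (m + 1)) (φ : X.obj (op ⦋m⦌))
    (h1 : ∀ ⦃U : SimplexCategoryᵒᵖ⦄ (g : U.unop ⟶ ⦋m⦌),
      Set.range g.toOrderHom ∪ {i} ≠ Set.univ → X.map g.op φ ∈ S.obj U)
    (h1' : ∀ ⦃U : SimplexCategoryᵒᵖ⦄ (g : U.unop ⟶ ⦋m⦌),
      X.map g.op φ ∈ S.obj U → Set.range g.toOrderHom ∪ {i} ≠ Set.univ)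
    (h2 : ∀ ⦃U : SimplexCategoryᵒᵖ⦄ (z : X.obj U),
      z ∈ T.obj U ↔ z ∈ S.obj U ∨ ∃ g : U.unop ⟶ ⦋m⦌, z = X.map g.op φ)
    (h3 : ∀ ⦃U : SimplexCategoryᵒᵖ⦄ (g g' : U.unop ⟶ ⦋m⦌),
      X.map g.op φ = X.map g'.op φ → g = g')
    {A B : SSet.{0}} (p : A ⟶ B) (hp : HasLiftingProperty ((horn m i).ι) p) :
    HasLiftingProperty (Subfunctor.homOfLe hST) p := by
  classical
  constructor
  intro f g sq
  have hXcomp : ∀ {U V : SimplexCategoryᵒᵖ} (σ : U ⟶ V) (gm : U.unop ⟶ ⦋m⦌),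
      X.map (σ.unop ≫ gm).op φ = X.map σ (X.map gm.op φ) := by
    intro U V σ gm
    rw [op_comp, Quiver.Hom.op_unop, FunctorToTypes.map_comp_apply]
  -- the horn map into A
  let α : (Λ[m, i] : SSet.{0}) ⟶ A :=
  { app := fun U => TypeCat.ofHom fun x => f.app U ⟨X.map x.1.down.op φ, h1 x.1.down x.2⟩
    naturality := by
      intro U V σ
      ext x
      have e : (⟨X.map (σ.unop ≫ x.1.down).op φ, h1 _ ((Λ[m, i] : SSet.{0}).map σ x).2⟩ :
            S.toFunctor.obj V)
          = S.toFunctor.map σ ⟨X.map x.1.down.op φ, h1 x.1.down x.2⟩ :=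
        Subtype.ext (hXcomp σ x.1.down)
      show f.app V _ = A.map σ (f.app U _)
      refine (congrArg (f.app V) e).trans ?_
      exact ConcreteCategory.congr_hom (f.naturality σ) _ }
  -- the simplex map into B
  let β : Δ[m] ⟶ B :=
  { app := fun U => TypeCat.ofHom fun x => g.app U ⟨X.map x.down.op φ, (h2 _).mpr (Or.inr ⟨x.down, rfl⟩)⟩
    naturality := by
      intro U V σ
      ext x
      have e : (⟨X.map (σ.unop ≫ x.down).op φ, (h2 _).mpr (Or.inr ⟨_, rfl⟩)⟩ :
            T.toFunctor.obj V)
          = T.toFunctor.map σ ⟨X.map x.down.op φ, (h2 _).mpr (Or.inr ⟨x.down, rfl⟩)⟩ :=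
        Subtype.ext (hXcomp σ x.down)
      show g.app V _ = B.map σ (g.app U _)
      refine (congrArg (g.app V) e).trans ?_
      exact ConcreteCategory.congr_hom (g.naturality σ) _ }
  have sq2 : CommSq α ((horn m i).ι) p β := by
    constructor
    ext U x
    have := ConcreteCategory.congr_hom (congr_app sq.w U) ⟨X.map x.1.down.op φ, h1 x.1.down x.2⟩
    exact this
  obtain ⟨γ⟩ := (hp.sq_hasLift sq2).exists_lift
  -- the underlying function of the lift
  let lapp : ∀ (U : SimplexCategoryᵒᵖ), T.toFunctor.obj U → A.obj U := fun U z =>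
    if hz : z.1 ∈ S.obj U then f.app U ⟨z.1, hz⟩
    else γ.l.app U (ULift.up (((h2 z.1).mp z.2).resolve_left hz).choose)
  have hγval : ∀ (U : SimplexCategoryᵒᵖ) (gm : U.unop ⟶ ⦋m⦌) (hS : X.map gm.op φ ∈ S.obj U),
      γ.l.app U (ULift.up gm) = f.app U ⟨X.map gm.op φ, hS⟩ := by
    intro U gm hS
    exact ConcreteCategory.congr_hom (congr_app γ.fac_left U) ⟨ULift.up gm, h1' gm hS⟩
  have hlval : ∀ (U : SimplexCategoryᵒᵖ) (gm : U.unop ⟶ ⦋m⦌) (hT : X.map gm.op φ ∈ T.obj U),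
      lapp U ⟨X.map gm.op φ, hT⟩ = γ.l.app U (ULift.up gm) := by
    intro U gm hT
    dsimp only [lapp]
    split_ifs with hz
    · exact (hγval U gm hz).symm
    · have hspec := (((h2 (X.map gm.op φ)).mp hT).resolve_left hz).choose_spec
      rw [h3 _ _ hspec.symm]
  let l : T.toFunctor ⟶ A :=
  { app := fun U => TypeCat.ofHom (lapp U)
    naturality := by
      intro U V σ
      ext z
      obtain ⟨z, hzT⟩ := z
      show lapp V ⟨X.map σ z, T.map σ hzT⟩ = A.map σ (lapp U ⟨z, hzT⟩)
      by_cases hz : z ∈ S.obj U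
      · have hz' : X.map σ z ∈ S.obj V := S.map σ hz
        dsimp only [lapp]
        rw [dif_pos hz', dif_pos hz]
        exact ConcreteCategory.congr_hom (f.naturality σ) ⟨z, hz⟩
      · obtain ⟨gm, rfl⟩ := ((h2 z).mp hzT).resolve_left hz
        rw [hlval U gm hzT]
        have hT' : X.map (σ.unop ≫ gm).op φ ∈ T.obj V :=
          (h2 _).mpr (Or.inr ⟨_, rfl⟩)
        have e : (⟨X.map σ (X.map gm.op φ), T.map σ hzT⟩ : T.toFunctor.obj V)
            = ⟨X.map (σ.unop ≫ gm).op φ, hT'⟩ := Subtype.ext (hXcomp σ gm).symm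
        rw [e, hlval V (σ.unop ≫ gm) hT']
        exact ConcreteCategory.congr_hom (γ.l.naturality σ) (ULift.up (α := U.unop ⟶ ⦋m⦌) gm) }
  refine CommSq.HasLift.mk' ⟨l, ?_, ?_⟩
  · ext U z
    show lapp U ⟨z.1, hST U z.2⟩ = f.app U z
    dsimp only [lapp]
    rw [dif_pos z.2]
    exact congr_arg (f.app U) (Subtype.ext rfl)
  · ext U z
    show p.app U (lapp U z) = g.app U z
    dsimp only [lapp]
    split_ifs with hz
    · have := ConcreteCategory.congr_hom (congr_app sq.w U) ⟨z.1, hz⟩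
      exact this
    · have hspec := (((h2 z.1).mp z.2).resolve_left hz).choose_spec
      have := ConcreteCategory.congr_hom (congr_app γ.fac_right U)
        (ULift.up (α := U.unop ⟶ ⦋m⦌) (((h2 z.1).mp z.2).resolve_left hz).choose)
      refine this.trans ?_
      exact congr_arg (g.app U) (Subtype.ext hspec.symm)





/-- vertex set of a simplex of `Δ[n]`, as a finset of naturals. -/
def R {n : ℕ} {U : SimplexCategoryᵒᵖ} (x : (Δ[n] : SSet.{0}).obj U) : Finset ℕ :=
  Finset.image (fun j => ((x.down.toOrderHom j : Fin (n + 1)) : ℕ)) Finset.univ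

lemma mem_R {n : ℕ} {U : SimplexCategoryᵒᵖ} {x : (Δ[n] : SSet.{0}).obj U} {a : ℕ} :
    a ∈ R x ↔ ∃ j, ((x.down.toOrderHom j : Fin (n + 1)) : ℕ) = a := by
  simp [R]

lemma R_le {n : ℕ} {U : SimplexCategoryᵒᵖ} (x : (Δ[n] : SSet.{0}).obj U) :
    ∀ a ∈ R x, a ≤ n := by
  intro a ha
  rw [mem_R] at ha
  obtain ⟨j, rfl⟩ := ha
  exact Nat.lt_succ_iff.mp (x.down.toOrderHom j).2

lemma R_map {n : ℕ} {U V : SimplexCategoryᵒᵖ} (σ : U ⟶ V) (x : (Δ[n] : SSet.{0}).obj U) :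
    R ((Δ[n] : SSet.{0}).map σ x) ⊆ R x := by
  intro a ha
  rw [mem_R] at ha ⊢
  obtain ⟨j, rfl⟩ := ha
  exact ⟨σ.unop.toOrderHom j, rfl⟩

/-- the subcomplex of `Δ[n]` determined by a downward-closed collection of vertex sets. -/
def admSub (n : ℕ) (P : Finset ℕ → Prop)
    (hmono : ∀ ⦃A B : Finset ℕ⦄, B ⊆ A → P A → P B) :
    Subfunctor (Δ[n] : SSet.{0}) where
  obj U := {x | P (R x)}
  map := by
    intro U V σ x hx
    exact hmono (R_map σ x) hx

lemma mem_admSub {n : ℕ} {P : Finset ℕ → Prop} {hmono : ∀ ⦃A B : Finset ℕ⦄, B ⊆ A → P A → P B}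
    {U : SimplexCategoryᵒᵖ} {x : (Δ[n] : SSet.{0}).obj U} :
    x ∈ (admSub n P hmono).obj U ↔ P (R x) := Iff.rfl



lemma eq_top_of_all {n : ℕ} {P : Finset ℕ → Prop}
    (hmono : ∀ ⦃A B : Finset ℕ⦄, B ⊆ A → P A → P B)
    (h : ∀ A ∈ Om n, P A) : admSub n P hmono = ⊤ := by
  apply Subfunctor.ext
  funext U
  ext x
  simp only [mem_admSub]
  constructor
  · intro _; trivial
  · intro _
    exact h _ ((mem_Om n).mpr (R_le x))

open scoped Classical in
lemma main (n : ℕ) {A B : SSet.{0}} (p : A ⟶ B)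
    (hp : ∀ (m : ℕ) (i : Fin (m + 1)), 0 < (i : ℕ) → (i : ℕ) < m →
      HasLiftingProperty ((horn m i).ι) p) (k : ℕ) :
    ∀ (P : Finset ℕ → Prop) (hP : Adm P) (inst : DecidablePred (fun A => ¬ P A)),
      (@Finset.filter _ _ inst (Om n)).card ≤ k →
      HasLiftingProperty ((admSub n P hP.mono).ι) p := by
  induction k with
  | zero =>
    intro P hP inst hcard
    have hall : ∀ A ∈ Om n, P A := by
      intro A hA
      by_contra hnA
      have hm : A ∈ (@Finset.filter _ _ inst (Om n)) :=
        Finset.mem_filter.mpr ⟨hA, hnA⟩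
      have := Finset.card_pos.mpr ⟨A, hm⟩
      omega
    rw [eq_top_of_all hP.mono hall]
    infer_instance
  | succ k ih =>
    intro P hP inst hcard
    by_cases hall : ∀ A ∈ Om n, P A
    · rw [eq_top_of_all hP.mono hall]; infer_instance
    push_neg at hall
    obtain ⟨Aw, hAw, hnAw⟩ := hall
    obtain ⟨A₀, hA₀, htop, hnP, hmin⟩ := exists_min_top n hP hAw hnAw
    have key : ∀ {B : Finset ℕ}, B ⊆ A₀ → B ≠ A₀ → B ≠ FF A₀ → P B :=
      fun {B} => key_lemma n hP hA₀ htop hnP hmin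
    have h3card : 3 ≤ A₀.card := htop.1
    set m := A₀.card - 1 with hmdef
    have hm : A₀.card = m + 1 := by omega
    have hm2 : 2 ≤ m := by omega
    set ψ := A₀.orderIsoOfFin hm with hψdef
    have hψmem : ∀ j, ((ψ j : ℕ)) ∈ A₀ := fun j => (ψ j).2
    have hψlt : ∀ j, ((ψ j : ℕ)) < n + 1 := fun j =>
      Nat.lt_succ_of_le ((mem_Om n).mp hA₀ _ (hψmem j))
    let φOrd : Fin (m + 1) →o Fin (n + 1) :=
      ⟨fun j => ⟨(ψ j : ℕ), hψlt j⟩, fun j k hjk =>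
        Fin.mk_le_mk.mpr (Subtype.coe_le_coe.mpr (ψ.monotone hjk))⟩
    let φ : (Δ[n] : SSet.{0}).obj (op ⦋m⦌) := ULift.up (SimplexCategory.Hom.mk φOrd)
    let iF : Fin (m + 1) := ⟨1, by omega⟩
    have hA₀ne : A₀.Nonempty := Finset.card_pos.mp (by omega)
    have hψ0 : (ψ 0 : ℕ) = mn A₀ := by
      refine (mn_eq (hψmem 0) ?_).symm
      intro b hb
      have h1 : ψ 0 ≤ ψ (ψ.symm ⟨b, hb⟩) := ψ.monotone (Fin.zero_le _)
      have h2 : ((ψ (ψ.symm ⟨b, hb⟩) : ℕ)) = b := by rw [ψ.apply_symm_apply]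
      calc ((ψ 0 : ℕ)) ≤ _ := Subtype.coe_le_coe.mpr h1
        _ = b := h2
    have hψ1 : (ψ iF : ℕ) = mn A₀ + 1 := by
      have hmemA : mn A₀ + 1 ∈ A₀ := htop.2
      set t := ψ.symm ⟨mn A₀ + 1, hmemA⟩ with ht
      have htv : ((ψ t : ℕ)) = mn A₀ + 1 := by rw [ht, ψ.apply_symm_apply]
      have ht0 : t ≠ 0 := by
        intro he
        rw [he, hψ0] at htv
        omega
      have h1t : iF ≤ t := by
        rw [Fin.le_def]
        show 1 ≤ t.val
        have : (0:ℕ) < t.val := Nat.pos_of_ne_zero (fun h => ht0 (Fin.ext h))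
        omega
      have hle : ((ψ iF : ℕ)) ≤ mn A₀ + 1 := htv ▸ Subtype.coe_le_coe.mpr (ψ.monotone h1t)
      have hgt : mn A₀ < ((ψ iF : ℕ)) := by
        have h0i : (0 : Fin (m+1)) < iF := by
          rw [Fin.lt_def]; show (0:ℕ) < 1; omega
        have := ψ.strictMono h0i
        have := Subtype.coe_lt_coe.mpr this
        omega
      omega
    have hmemRφ : ∀ {U : SimplexCategoryᵒᵖ} (g : U.unop ⟶ ⦋m⦌) (a : ℕ),
        a ∈ R ((Δ[n] : SSet.{0}).map g.op φ) ↔ ∃ j, ((ψ (g.toOrderHom j) : ℕ)) = a := by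
      intro U g a
      rw [mem_R]
      exact Iff.rfl
    have hRφsub : ∀ {U : SimplexCategoryᵒᵖ} (g : U.unop ⟶ ⦋m⦌),
        R ((Δ[n] : SSet.{0}).map g.op φ) ⊆ A₀ := by
      intro U g a ha
      rw [hmemRφ] at ha
      obtain ⟨j, rfl⟩ := ha
      exact hψmem _
    have h3 : ∀ ⦃U : SimplexCategoryᵒᵖ⦄ (g g' : U.unop ⟶ ⦋m⦌),
        (Δ[n] : SSet.{0}).map g.op φ = (Δ[n] : SSet.{0}).map g'.op φ → g = g' := by
      intro U g g' he
      apply SimplexCategory.Hom.ext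
      apply OrderHom.ext
      funext j
      have hv := congrArg (fun w => (((w : (Δ[n] : SSet.{0}).obj U).down.toOrderHom j :
        Fin (n+1)) : ℕ)) he
      have h2 : ψ (g.toOrderHom j) = ψ (g'.toOrderHom j) := Subtype.ext hv
      exact ψ.injective h2
    set F₀ := FF A₀ with hF₀
    have hFfree : isFree F₀ := top_FF_free htop
    have hnPF : ¬ P F₀ := fun h => hnP ((hP.pair A₀ htop).mpr h)
    set P' : Finset ℕ → Prop := fun C => P C ∨ C = A₀ ∨ C = F₀ with hP'def
    have hP' : Adm P' := by
      constructor
      · exact fun C hC => Or.inl (hP.spine C hC)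
      · intro C D hDC hC
        rcases hC with hC | hCe | hCe
        · exact Or.inl (hP.mono hDC hC)
        · rw [hCe] at hDC
          by_cases hB1 : D = A₀
          · exact Or.inr (Or.inl hB1)
          by_cases hB2 : D = F₀
          · exact Or.inr (Or.inr hB2)
          exact Or.inl (key hDC hB1 hB2)
        · rw [hCe] at hDC
          have hDA₀ : D ⊆ A₀ := hDC.trans FF_subset
          by_cases hB2 : D = F₀
          · exact Or.inr (Or.inr hB2)
          have hB1 : D ≠ A₀ := by
            intro he
            have h4 : A₀ ⊆ F₀ := he ▸ hDC
            exact FF_ne htop (Finset.Subset.antisymm FF_subset h4)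
          exact Or.inl (key hDA₀ hB1 hB2)
      · intro C hCtop
        by_cases hCA : C = A₀
        · subst hCA
          constructor
          · intro _; exact Or.inr (Or.inr rfl)
          · intro _; exact Or.inr (Or.inl rfl)
        · have hC1 : C ≠ F₀ := fun he => top_not_free hCtop (he ▸ hFfree)
          have hC2 : FF C ≠ A₀ := fun he => top_not_free htop (he ▸ top_FF_free hCtop)
          have hC3 : FF C ≠ F₀ := by
            intro he
            apply hCA
            have h5 := TT_FF hCtop
            rw [he, hF₀, TT_FF htop] at h5
            exact h5.symm
          constructor
          · rintro (h | h | h)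
            · exact Or.inl ((hP.pair C hCtop).mp h)
            · exact absurd h hCA
            · exact absurd h hC1
          · rintro (h | h | h)
            · exact Or.inl ((hP.pair C hCtop).mpr h)
            · exact absurd h hC2
            · exact absurd h hC3
    have hle : admSub n P hP.mono ≤ admSub n P' hP'.mono := fun U x hx => Or.inl hx
    have h1 : ∀ ⦃U : SimplexCategoryᵒᵖ⦄ (g : U.unop ⟶ ⦋m⦌),
        Set.range g.toOrderHom ∪ {iF} ≠ Set.univ →
        (Δ[n] : SSet.{0}).map g.op φ ∈ (admSub n P hP.mono).obj U := by
      intro U g hne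
      rw [Set.ne_univ_iff_exists_notMem] at hne
      obtain ⟨j, hj⟩ := hne
      simp only [Set.mem_union, Set.mem_range, Set.mem_singleton_iff, not_or, not_exists] at hj
      obtain ⟨hj1, hj2⟩ := hj
      rw [mem_admSub]
      apply key (hRφsub g)
      · intro he
        have hmem : ((ψ j : ℕ)) ∈ R ((Δ[n] : SSet.{0}).map g.op φ) := by
          rw [he]; exact hψmem j
        rw [hmemRφ] at hmem
        obtain ⟨k', hk⟩ := hmem
        exact hj1 k' (ψ.injective (Subtype.ext hk))
      · intro he
        have hmem : ((ψ j : ℕ)) ∈ F₀ := by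
          rw [hF₀, FF]
          refine Finset.mem_erase.mpr ⟨?_, hψmem j⟩
          intro hv
          exact hj2 (ψ.injective (Subtype.ext (hv.trans hψ1.symm)))
        rw [← he] at hmem
        rw [hmemRφ] at hmem
        obtain ⟨k', hk⟩ := hmem
        exact hj1 k' (ψ.injective (Subtype.ext hk))
    have h1' : ∀ ⦃U : SimplexCategoryᵒᵖ⦄ (g : U.unop ⟶ ⦋m⦌),
        (Δ[n] : SSet.{0}).map g.op φ ∈ (admSub n P hP.mono).obj U →
        Set.range g.toOrderHom ∪ {iF} ≠ Set.univ := by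
      intro U g hgS huniv
      rw [mem_admSub] at hgS
      have hsub : F₀ ⊆ R ((Δ[n] : SSet.{0}).map g.op φ) := by
        intro a ha
        rw [hF₀, FF] at ha
        obtain ⟨hane, haA⟩ := Finset.mem_erase.mp ha
        set t := ψ.symm ⟨a, haA⟩ with ht
        have htv : ((ψ t : ℕ)) = a := by rw [ht, ψ.apply_symm_apply]
        have htne : t ≠ iF := by
          intro he; rw [he, hψ1] at htv; exact hane htv.symm
        have hmem : t ∈ Set.range g.toOrderHom ∪ {iF} := huniv ▸ Set.mem_univ t
        rcases hmem with ⟨k', hk⟩ | h'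
        · rw [hmemRφ]; exact ⟨k', by rw [hk, htv]⟩
        · exact absurd h' htne
      have hsub2 := hRφsub g
      by_cases hmem : mn A₀ + 1 ∈ R ((Δ[n] : SSet.{0}).map g.op φ)
      · have heq : R ((Δ[n] : SSet.{0}).map g.op φ) = A₀ := by
          apply Finset.Subset.antisymm hsub2
          intro a haA
          by_cases hae : a = mn A₀ + 1
          · exact hae ▸ hmem
          · exact hsub (Finset.mem_erase.mpr ⟨hae, haA⟩)
        rw [heq] at hgS; exact hnP hgS
      · have heq : R ((Δ[n] : SSet.{0}).map g.op φ) = F₀ := by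
          apply Finset.Subset.antisymm _ hsub
          intro a haR
          exact Finset.mem_erase.mpr ⟨fun he => hmem (he ▸ haR), hsub2 haR⟩
        rw [heq] at hgS; exact hnPF hgS
    have hfactor : ∀ {U : SimplexCategoryᵒᵖ} (z : (Δ[n] : SSet.{0}).obj U),
        R z ⊆ A₀ → ∃ g : U.unop ⟶ ⦋m⦌, z = (Δ[n] : SSet.{0}).map g.op φ := by
      intro U z hz
      have hzmem : ∀ j, ((z.down.toOrderHom j : Fin (n+1)) : ℕ) ∈ A₀ := fun j =>
        hz (mem_R.mpr ⟨j, rfl⟩)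
      refine ⟨SimplexCategory.Hom.mk ⟨fun j => ψ.symm ⟨_, hzmem j⟩, ?_⟩, ?_⟩
      · intro j k' hjk
        apply ψ.symm.monotone
        exact Subtype.mk_le_mk.mpr (z.down.toOrderHom.monotone hjk)
      · refine ULift.ext _ _ ?_
        apply SimplexCategory.Hom.ext
        apply OrderHom.ext
        funext j
        apply Fin.ext
        show ((z.down.toOrderHom j : Fin (n+1)) : ℕ) = ((ψ (ψ.symm ⟨_, hzmem j⟩) : ℕ))
        rw [ψ.apply_symm_apply]
    have h2 : ∀ ⦃U : SimplexCategoryᵒᵖ⦄ (z : (Δ[n] : SSet.{0}).obj U),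
        z ∈ (admSub n P' hP'.mono).obj U ↔
          z ∈ (admSub n P hP.mono).obj U ∨
            ∃ g : U.unop ⟶ ⦋m⦌, z = (Δ[n] : SSet.{0}).map g.op φ := by
      intro U z
      rw [mem_admSub, mem_admSub]
      constructor
      · rintro (h | h | h)
        · exact Or.inl h
        · exact Or.inr (hfactor z (le_of_eq h))
        · exact Or.inr (hfactor z (by rw [h, hF₀]; exact FF_subset))
      · rintro (h | ⟨g, rfl⟩)
        · exact Or.inl h
        · by_cases he1 : R ((Δ[n] : SSet.{0}).map g.op φ) = A₀
          · exact Or.inr (Or.inl he1)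
          by_cases he2 : R ((Δ[n] : SSet.{0}).map g.op φ) = F₀
          · exact Or.inr (Or.inr he2)
          exact Or.inl (key (hRφsub g) he1 he2)
    have hstep := step hle m iF φ h1 h1' h2 h3 p
      (hp m iF (by show (0:ℕ) < 1; omega) (by show (1:ℕ) < m; omega))
    have inst' : DecidablePred (fun C => ¬ P' C) := Classical.decPred _
    have hsubc : (@Finset.filter _ _ inst' (Om n)) ⊆
        (@Finset.filter _ _ inst (Om n)) := by
      intro C hC
      obtain ⟨hC1, hC2⟩ := Finset.mem_filter.mp hC
      exact Finset.mem_filter.mpr ⟨hC1, fun h => hC2 (Or.inl h)⟩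
    have hAin : A₀ ∈ (@Finset.filter _ _ inst (Om n)) :=
      Finset.mem_filter.mpr ⟨hA₀, hnP⟩
    have hAnotin : A₀ ∉ (@Finset.filter _ _ inst' (Om n)) := by
      intro hc
      exact (Finset.mem_filter.mp hc).2 (Or.inr (Or.inl rfl))
    have hcard' : (@Finset.filter _ _ inst' (Om n)).card ≤ k := by
      have := Finset.card_lt_card ⟨hsubc, fun hc => hAnotin (hc hAin)⟩
      omega
    haveI := ih P' hP' inst' hcard'
    haveI := hstep
    rw [← Subfunctor.homOfLe_ι hle]
    infer_instance

end SpineAux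


open CategoryTheory Simplicial SSet

/-- A map of simplicial sets is *inner anodyne* if it lies in the weak saturation
of the inner horn inclusions, i.e. it has the left lifting property with respect
to every morphism having the right lifting property with respect to all inner
horn inclusions `Λ[n, i] ⟶ Δ[n]`, `0 < i < n`. -/
def InnerAnodyne {X Y : SSet.{0}} (f : X ⟶ Y) : Prop :=
  ∀ ⦃A B : SSet.{0}⦄ (p : A ⟶ B),
    (∀ (n : ℕ) (i : Fin (n + 1)), 0 < (i : ℕ) → (i : ℕ) < n →
      HasLiftingProperty (horn n i).ι p) →
    HasLiftingProperty f p

/-- The spine of `Δ[n]`: the simplicial subset of `Δ[n]` consisting of those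
simplices whose set of vertices is contained in a consecutive pair `{i, i+1}`;
it is the union of the edges `i → i+1` together with all vertices. -/
def spineSubcomplex (n : ℕ) : Subfunctor (Δ[n] : SSet.{0}) where
  obj U := {x | ∀ j k, ((x.down.toOrderHom j : Fin (n + 1)) : ℕ) ≤
      ((x.down.toOrderHom k : Fin (n + 1)) : ℕ) + 1}
  map := by
    intro U V i x hx
    intro j k
    exact hx _ _

/-- The admissibility structure on the collection of "spine" vertex sets. -/
lemma spineAdm : SpineAux.Adm SpineAux.isSpine := by
  constructor
  · exact fun A h => h
  · exact fun A B h hA a ha b hb => hA a (h ha) b (h hb)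
  · intro A htop
    exact iff_of_false (SpineAux.top_not_spine htop)
      (SpineAux.free_not_spine (SpineAux.top_FF_free htop))

/-- The spine subcomplex coincides with the admissible subcomplex of spine sets. -/
lemma spine_eq (n : ℕ) :
    spineSubcomplex n = SpineAux.admSub n SpineAux.isSpine spineAdm.mono := by
  apply Subfunctor.ext
  funext U
  ext x
  show (∀ j k, ((x.down.toOrderHom j : Fin (n + 1)) : ℕ) ≤
      ((x.down.toOrderHom k : Fin (n + 1)) : ℕ) + 1) ↔ SpineAux.isSpine (SpineAux.R x)
  constructor
  · intro h a ha b hb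
    rw [SpineAux.mem_R] at ha hb
    obtain ⟨j, rfl⟩ := ha
    obtain ⟨k, rfl⟩ := hb
    exact h j k
  · intro h j k
    exact h _ (SpineAux.mem_R.mpr ⟨j, rfl⟩) _ (SpineAux.mem_R.mpr ⟨k, rfl⟩)

/-- The spine inclusion `Spine[n] ⟶ Δ[n]` is inner anodyne. -/
theorem stmt3 (n : ℕ) : InnerAnodyne ((spineSubcomplex n).ι) := by
  intro A B p hp
  rw [spine_eq]
  exact SpineAux.main n p hp
    (@Finset.filter _ _ (Classical.decPred _) (SpineAux.Om n)).card
    SpineAux.isSpine spineAdm (Classical.decPred _) le_rfl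
end

section
/- Let D : ℕ → Cat be a sequence of categories and fully faithful functors F_n : D(n) → D(n+1), each admitting a right adjoint G_n with G_n ∘ F_n ≅ id. Then the colimit category colim D contains D(0) as a coreflective full subcategory: the canonical functor D(0) → colim D is fully faithful and admits a right adjoint. -/
/-!
STATEMENT 18 (simplified formalizable version, as in the NL statement):
If `D : ℕ ⥤ Cat` is a sequence of categories whose transition functors
`F_n : D(n) ⥤ D(n+1)` are fully faithful and each admits a right adjoint `G_n`
with `G_n ∘ F_n ≅ id`, then `D(0)` sits inside the colimit category as a
coreflective full subcategory: the canonical functor `D(0) ⟶ colim D` is fully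
faithful and admits a right adjoint.
-/

open CategoryTheory Limits

namespace S18

universe v u

variable (D : ℕ ⥤ Cat.{v, u})

/-! ### Transition functors -/

def tr {n m : ℕ} (h : n ≤ m) : (D.obj n : Cat.{v,u}) ⥤ (D.obj m : Cat.{v,u}) :=
  (D.map (homOfLE h)).toFunctor

lemma tr_refl (n : ℕ) : tr D (le_refl n) = 𝟭 _ := congrArg Cat.Hom.toFunctor (D.map_id n)

lemma tr_tr {n m k : ℕ} (h : n ≤ m) (h' : m ≤ k) :
    tr D h ⋙ tr D h' = tr D (h.trans h') := by
  have : homOfLE h ≫ homOfLE h' = homOfLE (h.trans h') := rfl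
  show (D.map _ ≫ D.map _).toFunctor = _
  rw [← D.map_comp, this, tr]

lemma tr_obj_tr {n m k : ℕ} (h : n ≤ m) (h' : m ≤ k) (X : D.obj n) :
    (tr D h').obj ((tr D h).obj X) = (tr D (h.trans h')).obj X :=
  Functor.congr_obj (tr_tr D h h') X

lemma tr_obj_refl {n : ℕ} (X : D.obj n) : (tr D (le_refl n)).obj X = X :=
  Functor.congr_obj (tr_refl D n) X

lemma tr_map_tr {n m k : ℕ} (h : n ≤ m) (h' : m ≤ k) {X Y : D.obj n} (f : X ⟶ Y) :
    (tr D h').map ((tr D h).map f) =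
      eqToHom (tr_obj_tr D h h' X) ≫ (tr D (h.trans h')).map f ≫
        eqToHom (tr_obj_tr D h h' Y).symm :=
  Functor.congr_hom (tr_tr D h h') f

lemma tr_map_refl {n : ℕ} {X Y : D.obj n} (f : X ⟶ Y) :
    (tr D (le_refl n)).map f =
      eqToHom (tr_obj_refl D X) ≫ f ≫ eqToHom (tr_obj_refl D Y).symm :=
  Functor.congr_hom (tr_refl D n) f

/-! ### Objects of the colimit category -/

abbrev Ob : Type u := Σ n : ℕ, (D.obj n : Cat.{v,u})

def obRel : Ob D → Ob D → Prop := fun a b =>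
  b = ⟨a.1 + 1, (tr D (Nat.le_succ a.1)).obj a.2⟩

def TOb : Type u := Quot (obRel D)

def mkOb (n : ℕ) (X : D.obj n) : TOb D := Quot.mk _ ⟨n, X⟩

lemma mk_push {n : ℕ} (X : D.obj n) {m : ℕ} (h : n ≤ m) :
    mkOb D n X = mkOb D m ((tr D h).obj X) := by
  induction m, h using Nat.le_induction with
  | base => exact congrArg (fun Y => mkOb D n Y) (tr_obj_refl D X).symm
  | succ m hm ih =>
      refine ih.trans ?_
      have step : mkOb D m ((tr D hm).obj X)
          = mkOb D (m+1) ((tr D (Nat.le_succ m)).obj ((tr D hm).obj X)) :=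
        Quot.sound rfl
      refine step.trans ?_
      exact congrArg (fun Y => mkOb D (m+1) Y) (tr_obj_tr D hm (Nat.le_succ m) X)

def agrees (a b : Ob D) : Prop :=
  ∃ (l : ℕ) (h1 : a.1 ≤ l) (h2 : b.1 ≤ l), (tr D h1).obj a.2 = (tr D h2).obj b.2

lemma agrees_refl (a : Ob D) : agrees D a a := ⟨a.1, le_refl _, le_refl _, rfl⟩

lemma agrees_symm {a b : Ob D} : agrees D a b → agrees D b a := by
  rintro ⟨l, h1, h2, e⟩; exact ⟨l, h2, h1, e.symm⟩

lemma agrees_trans {a b c : Ob D} : agrees D a b → agrees D b c → agrees D a c := by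
  rintro ⟨l, h1, h2, e⟩ ⟨l', h1', h2', e'⟩
  refine ⟨max l l', h1.trans (le_max_left _ _), h2'.trans (le_max_right _ _), ?_⟩
  have e2 : (tr D (le_max_left l l')).obj ((tr D h1).obj a.2)
      = (tr D (le_max_left l l')).obj ((tr D h2).obj b.2) := by rw [e]
  have e3 : (tr D (le_max_right l l')).obj ((tr D h1').obj b.2)
      = (tr D (le_max_right l l')).obj ((tr D h2').obj c.2) := by rw [e']
  rw [tr_obj_tr, tr_obj_tr] at e2
  rw [tr_obj_tr, tr_obj_tr] at e3
  refine e2.trans ?_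
  refine Eq.trans ?_ e3
  rfl

lemma agrees_of_eq {a b : Ob D} (h : Quot.mk (obRel D) a = Quot.mk (obRel D) b) :
    agrees D a b := by
  have hg := Quot.eqvGen_exact h
  clear h
  induction hg with
  | rel x y hxy =>
      subst hxy
      exact ⟨x.1 + 1, Nat.le_succ _, le_refl _, (tr_obj_refl D _).symm⟩
  | refl x => exact agrees_refl D x
  | symm x y _ ih => exact agrees_symm D ih
  | trans x y z _ _ ih1 ih2 => exact agrees_trans D ih1 ih2


noncomputable def rp (q : TOb D) : Ob D := (Quot.exists_rep q).choose

lemma rp_spec (q : TOb D) : Quot.mk (obRel D) (rp D q) = q := (Quot.exists_rep q).choose_spec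

lemma rp_agrees (a : Ob D) : agrees D (rp D (Quot.mk (obRel D) a)) a :=
  agrees_of_eq D (rp_spec D _)

/-! ### Morphism representatives -/

structure HRep (a b : Ob D) : Type v where
  l : ℕ
  h1 : a.1 ≤ l
  h2 : b.1 ≤ l
  f : (tr D h1).obj a.2 ⟶ (tr D h2).obj b.2

variable {D}

lemma HRep.ext' {a b : Ob D} {r r' : HRep D a b} (hl : r.l = r'.l)
    (hf : HEq r.f r'.f) : r = r' := by
  cases r with | mk l h1 h2 f =>
  cases r' with | mk l' h1' h2' f' =>
  dsimp at hl hf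
  subst hl
  rw [eq_of_heq hf]

@[reducible]
def pushHRep {a b : Ob D} (r : HRep D a b) {l' : ℕ} (h : r.l ≤ l') : HRep D a b :=
  ⟨l', r.h1.trans h, r.h2.trans h,
    eqToHom (tr_obj_tr D r.h1 h a.2).symm ≫ (tr D h).map r.f ≫
      eqToHom (tr_obj_tr D r.h2 h b.2)⟩

lemma pushHRep_refl {a b : Ob D} (r : HRep D a b) : pushHRep r (le_refl r.l) = r := by
  refine HRep.ext' rfl (heq_of_eq ?_)
  show eqToHom _ ≫ (tr D (le_refl r.l)).map r.f ≫ eqToHom _ = r.f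
  rw [tr_map_refl]
  simp

lemma pushHRep_trans {a b : Ob D} (r : HRep D a b) {l' l'' : ℕ} (h : r.l ≤ l')
    (h' : l' ≤ l'') : pushHRep (pushHRep r h) h' = pushHRep r (h.trans h') := by
  refine HRep.ext' rfl (heq_of_eq ?_)
  show eqToHom _ ≫ (tr D h').map ((pushHRep r h).f) ≫ eqToHom _ = _
  show _ = eqToHom _ ≫ (tr D (h.trans h')).map r.f ≫ eqToHom _
  simp only [pushHRep, Functor.map_comp, eqToHom_map, tr_map_tr, Category.assoc,
    eqToHom_trans, eqToHom_trans_assoc, eqToHom_refl, Category.id_comp, Category.comp_id]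

lemma pushHRep_congr {a b : Ob D} {r r' : HRep D a b} (e : r = r') {L : ℕ}
    (h : r.l ≤ L) (h' : r'.l ≤ L) : pushHRep r h = pushHRep r' h' := by
  subst e; rfl

variable (D)

def hRel (a b : Ob D) : HRep D a b → HRep D a b → Prop := fun r r' =>
  ∃ h : r.l ≤ r'.l, r' = pushHRep r h

variable {D}

lemma sound_push {a b : Ob D} (r : HRep D a b) {l' : ℕ} (h : r.l ≤ l') :
    Quot.mk (hRel D a b) r = Quot.mk (hRel D a b) (pushHRep r h) :=
  Quot.sound ⟨h, rfl⟩

lemma class_eq {a b : Ob D} {r r' : HRep D a b} (L : ℕ) (hr : r.l ≤ L) (hr' : r'.l ≤ L)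
    (key : (pushHRep r hr).f = (pushHRep r' hr').f) :
    Quot.mk (hRel D a b) r = Quot.mk (hRel D a b) r' := by
  refine (sound_push r hr).trans (Eq.trans ?_ (sound_push r' hr').symm)
  exact congrArg _ (HRep.ext' rfl (heq_of_eq key))

lemma thom_exact {a b : Ob D} {r r' : HRep D a b}
    (H : Quot.mk (hRel D a b) r = Quot.mk (hRel D a b) r') :
    ∃ (L : ℕ) (hL : r.l ≤ L) (hL' : r'.l ≤ L), pushHRep r hL = pushHRep r' hL' := by
  have hg := Quot.eqvGen_exact H
  clear H
  induction hg with
  | rel x y hxy =>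
      obtain ⟨h, hy⟩ := hxy
      exact ⟨y.l, h, le_refl _,
        ((pushHRep_refl _).symm).trans (pushHRep_congr hy.symm _ _)⟩
  | refl x => exact ⟨x.l, le_refl _, le_refl _, rfl⟩
  | symm x y _ ih =>
      obtain ⟨L, hL, hL', e⟩ := ih
      exact ⟨L, hL', hL, e.symm⟩
  | trans x y z _ _ ih1 ih2 =>
      obtain ⟨L, hL, hL', e⟩ := ih1
      obtain ⟨M, hM, hM', e'⟩ := ih2
      refine ⟨max L M, hL.trans (le_max_left _ _), hM'.trans (le_max_right _ _), ?_⟩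
      have E1 := pushHRep_congr e (show L ≤ max L M from le_max_left L M)
        (show L ≤ max L M from le_max_left L M)
      have E2 := pushHRep_congr e' (show M ≤ max L M from le_max_right L M)
        (show M ≤ max L M from le_max_right L M)
      rw [pushHRep_trans, pushHRep_trans] at E1 E2
      refine E1.trans (Eq.trans ?_ E2)
      rfl
/-! ### f-level push lemmas -/

lemma HRep.f_heq {a b : Ob D} {r r' : HRep D a b} (e : r = r') : HEq r.f r'.f := by
  subst e; rfl

lemma pushf_refl {a b : Ob D} (r : HRep D a b) :
    (pushHRep r (le_refl r.l)).f = r.f :=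
  eq_of_heq (HRep.f_heq (pushHRep_refl r))

lemma pushf_trans {a b : Ob D} (r : HRep D a b) {l' l'' : ℕ} (h : r.l ≤ l')
    (h' : l' ≤ l'') :
    (pushHRep r (h.trans h')).f = (pushHRep (pushHRep r h) h').f :=
  eq_of_heq (HRep.f_heq (pushHRep_trans r h h').symm)

/-! ### Composition -/

@[reducible]
def compRep {a b c : Ob D} (r : HRep D a b) (s : HRep D b c) (L : ℕ)
    (hr : r.l ≤ L) (hs : s.l ≤ L) : HRep D a c :=
  ⟨L, r.h1.trans hr, s.h2.trans hs, (pushHRep r hr).f ≫ (pushHRep s hs).f⟩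

lemma compRep_push {a b c : Ob D} (r : HRep D a b) (s : HRep D b c) (L : ℕ)
    (hr : r.l ≤ L) (hs : s.l ≤ L) {L' : ℕ} (h : L ≤ L') :
    pushHRep (compRep r s L hr hs) h = compRep r s L' (hr.trans h) (hs.trans h) := by
  refine HRep.ext' rfl (heq_of_eq ?_)
  show eqToHom _ ≫ (tr D h).map ((pushHRep r hr).f ≫ (pushHRep s hs).f) ≫ eqToHom _
      = (pushHRep r (hr.trans h)).f ≫ (pushHRep s (hs.trans h)).f
  rw [pushf_trans r hr h, pushf_trans s hs h]
  show _ = (eqToHom _ ≫ (tr D h).map (pushHRep r hr).f ≫ eqToHom _)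
      ≫ (eqToHom _ ≫ (tr D h).map (pushHRep s hs).f ≫ eqToHom _)
  simp

lemma compRep_class {a b c : Ob D} (r : HRep D a b) (s : HRep D b c)
    (L : ℕ) (hr : r.l ≤ L) (hs : s.l ≤ L) (L' : ℕ) (hr' : r.l ≤ L') (hs' : s.l ≤ L') :
    Quot.mk (hRel D a c) (compRep r s L hr hs)
      = Quot.mk (hRel D a c) (compRep r s L' hr' hs') := by
  refine (sound_push _ (le_max_left L L')).trans
    (Eq.trans ?_ (sound_push _ (le_max_right L L')).symm)
  rw [compRep_push, compRep_push]

lemma compRep_class_congr_left {a b c : Ob D} {r r' : HRep D a b}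
    (hrr : Quot.mk (hRel D a b) r = Quot.mk (hRel D a b) r') (s : HRep D b c)
    (L : ℕ) (hr : r.l ≤ L) (hs : s.l ≤ L) (hr' : r'.l ≤ L) (hs' : s.l ≤ L) :
    Quot.mk (hRel D a c) (compRep r s L hr hs)
      = Quot.mk (hRel D a c) (compRep r' s L hr' hs') := by
  obtain ⟨M, hM, hM', e⟩ := thom_exact hrr
  have hLM : L ≤ max L M := le_max_left _ _
  have hML : M ≤ max L M := le_max_right _ _
  refine (compRep_class r s L hr hs (max L M) (hM.trans hML) (hs.trans hLM)).trans
    (Eq.trans ?_ (compRep_class r' s L hr' hs' (max L M) (hM'.trans hML)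
      (hs.trans hLM)).symm)
  congr 1
  refine HRep.ext' rfl (heq_of_eq ?_)
  show (pushHRep r (hM.trans hML)).f ≫ (pushHRep s _).f
      = (pushHRep r' (hM'.trans hML)).f ≫ (pushHRep s _).f
  rw [pushf_trans r hM hML, pushf_trans r' hM' hML]
  congr 1
  exact eq_of_heq (HRep.f_heq (pushHRep_congr e _ _))

lemma compRep_class_congr_right {a b c : Ob D} (r : HRep D a b) {s s' : HRep D b c}
    (hss : Quot.mk (hRel D b c) s = Quot.mk (hRel D b c) s')
    (L : ℕ) (hr : r.l ≤ L) (hs : s.l ≤ L) (hr' : r.l ≤ L) (hs' : s'.l ≤ L) :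
    Quot.mk (hRel D a c) (compRep r s L hr hs)
      = Quot.mk (hRel D a c) (compRep r s' L hr' hs') := by
  obtain ⟨M, hM, hM', e⟩ := thom_exact hss
  have hLM : L ≤ max L M := le_max_left _ _
  have hML : M ≤ max L M := le_max_right _ _
  refine (compRep_class r s L hr hs (max L M) (hr.trans hLM) (hM.trans hML)).trans
    (Eq.trans ?_ (compRep_class r s' L hr' hs' (max L M) (hr.trans hLM)
      (hM'.trans hML)).symm)
  congr 1
  refine HRep.ext' rfl (heq_of_eq ?_)
  show (pushHRep r _).f ≫ (pushHRep s (hM.trans hML)).f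
      = (pushHRep r _).f ≫ (pushHRep s' (hM'.trans hML)).f
  rw [pushf_trans s hM hML, pushf_trans s' hM' hML]
  congr 1
  exact eq_of_heq (HRep.f_heq (pushHRep_congr e _ _))

/-! ### The category instance -/

noncomputable instance categoryTOb : Category.{v} (TOb D) where
  Hom q₁ q₂ := Quot (hRel D (rp D q₁) (rp D q₂))
  id q := Quot.mk _ ⟨(rp D q).1, le_refl _, le_refl _, 𝟙 _⟩
  comp {q₁ q₂ q₃} := fun φ ψ =>
    Quot.lift (fun r => Quot.lift
        (fun s => Quot.mk (hRel D (rp D q₁) (rp D q₃))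
          (compRep r s (max r.l s.l) (le_max_left _ _) (le_max_right _ _)))
        (fun s s' hss' => by
          have hc : Quot.mk (hRel D (rp D q₂) (rp D q₃)) s = Quot.mk _ s' :=
            Quot.sound hss'
          refine (compRep_class r s _ (le_max_left _ _) (le_max_right _ _)
            (max (max r.l s.l) s'.l) (by omega) (by omega)).trans ?_
          refine Eq.trans ?_ (compRep_class r s' _ (le_max_left _ _) (le_max_right _ _)
            (max (max r.l s.l) s'.l) (by omega) (by omega)).symm
          exact compRep_class_congr_right r hc _ (by omega) (by omega) (by omega) (by omega)) ψ)
      (fun r r' hrr' => by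
        have hc : Quot.mk (hRel D (rp D q₁) (rp D q₂)) r = Quot.mk _ r' :=
          Quot.sound hrr'
        induction ψ using Quot.ind with | _ s =>
        dsimp only
        refine (compRep_class r s _ (le_max_left _ _) (le_max_right _ _)
          (max (max r.l s.l) r'.l) (by omega) (by omega)).trans ?_
        refine Eq.trans ?_ (compRep_class r' s _ (le_max_left _ _) (le_max_right _ _)
          (max (max r.l s.l) r'.l) (by omega) (by omega)).symm
        exact compRep_class_congr_left hc s _ (by omega) (by omega) (by omega)
          (by omega)) φ
  id_comp := by
    intro q₁ q₂ φ
    induction φ using Quot.ind with | _ r =>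
    show Quot.mk _ (compRep ⟨(rp D q₁).1, le_refl _, le_refl _, 𝟙 _⟩ r _ _ _)
      = Quot.mk _ r
    refine (compRep_class _ r _ (le_max_left _ _) (le_max_right _ _)
      r.l r.h1 (le_refl _)).trans ?_
    refine class_eq r.l (le_refl _) (le_refl _) ?_
    rw [pushf_refl, pushf_refl]
    show (pushHRep ⟨(rp D q₁).1, le_refl _, le_refl _, 𝟙 _⟩ r.h1).f
        ≫ (pushHRep r (le_refl _)).f = r.f
    rw [pushf_refl]
    show (eqToHom _ ≫ (tr D r.h1).map (𝟙 _) ≫ eqToHom _) ≫ r.f = r.f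
    simp
  comp_id := by
    intro q₁ q₂ φ
    induction φ using Quot.ind with | _ r =>
    show Quot.mk _ (compRep r ⟨(rp D q₂).1, le_refl _, le_refl _, 𝟙 _⟩ _ _ _)
      = Quot.mk _ r
    refine (compRep_class r _ _ (le_max_left _ _) (le_max_right _ _)
      r.l (le_refl _) r.h2).trans ?_
    refine class_eq r.l (le_refl _) (le_refl _) ?_
    rw [pushf_refl, pushf_refl]
    show (pushHRep r (le_refl _)).f
        ≫ (pushHRep ⟨(rp D q₂).1, le_refl _, le_refl _, 𝟙 _⟩ r.h2).f = r.f
    rw [pushf_refl]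
    show r.f ≫ (eqToHom _ ≫ (tr D r.h2).map (𝟙 _) ≫ eqToHom _) = r.f
    simp
  assoc := by
    intro q₁ q₂ q₃ q₄ φ ψ χ
    induction φ using Quot.ind with | _ r =>
    induction ψ using Quot.ind with | _ s =>
    induction χ using Quot.ind with | _ t =>
    show Quot.mk _ (compRep (compRep r s _ _ _) t _ _ _)
      = Quot.mk _ (compRep r (compRep s t _ _ _) _ _ _)
    have h1 : max r.l s.l ≤ max (max r.l s.l) t.l := le_max_left _ _
    have h2 : t.l ≤ max (max r.l s.l) t.l := le_max_right _ _
    have h3 : r.l ≤ max (max r.l s.l) t.l := by omega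
    have h4 : max s.l t.l ≤ max (max r.l s.l) t.l := by omega
    refine (compRep_class _ t _ (le_max_left _ _) (le_max_right _ _)
      (max (max r.l s.l) t.l) h1 h2).trans ?_
    refine Eq.trans ?_ (compRep_class r _ _ (le_max_left _ _) (le_max_right _ _)
      (max (max r.l s.l) t.l) h3 h4).symm
    congr 1
    refine HRep.ext' rfl (heq_of_eq ?_)
    show (pushHRep (compRep r s (max r.l s.l) (le_max_left _ _) (le_max_right _ _)) h1).f
        ≫ (pushHRep t h2).f
      = (pushHRep r h3).f
        ≫ (pushHRep (compRep s t (max s.l t.l) (le_max_left _ _) (le_max_right _ _)) h4).f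
    have e1 : (pushHRep (compRep r s (max r.l s.l)
          (le_max_left _ _) (le_max_right _ _)) h1).f
        = (compRep r s (max (max r.l s.l) t.l) ((le_max_left _ _).trans h1)
          ((le_max_right _ _).trans h1)).f :=
      eq_of_heq (HRep.f_heq (compRep_push _ _ _ _ _ _))
    have e2 : (pushHRep (compRep s t (max s.l t.l)
          (le_max_left _ _) (le_max_right _ _)) h4).f
        = (compRep s t (max (max r.l s.l) t.l) ((le_max_left _ _).trans h4)
          ((le_max_right _ _).trans h4)).f :=
      eq_of_heq (HRep.f_heq (compRep_push _ _ _ _ _ _))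
    rw [e1, e2]
    show ((pushHRep r _).f ≫ (pushHRep s _).f) ≫ (pushHRep t h2).f
      = (pushHRep r h3).f ≫ ((pushHRep s _).f ≫ (pushHRep t _).f)
    rw [Category.assoc]
/-! ### Alignment of representatives -/

noncomputable def alevel (a : Ob D) : ℕ := (rp_agrees D a).choose

lemma alev1 (a : Ob D) : (rp D (Quot.mk (obRel D) a)).1 ≤ alevel a :=
  (rp_agrees D a).choose_spec.choose

lemma alev2 (a : Ob D) : a.1 ≤ alevel a :=
  (rp_agrees D a).choose_spec.choose_spec.choose

lemma alev_eq (a : Ob D) :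
    (tr D (alev1 a)).obj (rp D (Quot.mk (obRel D) a)).2 = (tr D (alev2 a)).obj a.2 :=
  (rp_agrees D a).choose_spec.choose_spec.choose_spec

lemma conj_push_eq {a : Ob D} {n L : ℕ} {X : D.obj n} (H1 : a.1 ≤ L) (hn : n ≤ L)
    (E1 : (tr D H1).obj a.2 = (tr D hn).obj X) {L'' : ℕ} (h : L ≤ L'') :
    (tr D (H1.trans h)).obj a.2 = (tr D (hn.trans h)).obj X := by
  have t1 := tr_obj_tr D H1 h a.2
  have t2 := tr_obj_tr D hn h X
  rw [← t1, ← t2, E1]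

lemma align_at (a : Ob D) {L : ℕ} (hL : alevel a ≤ L) :
    (tr D ((alev1 a).trans hL)).obj (rp D (Quot.mk (obRel D) a)).2
      = (tr D ((alev2 a).trans hL)).obj a.2 :=
  conj_push_eq (alev1 a) (alev2 a) (alev_eq a) hL

/-! ### Conjugated representatives -/

@[reducible]
def conjRep (a b : Ob D) {n : ℕ} {X Y : D.obj n} (f : X ⟶ Y) (L : ℕ)
    (H1 : a.1 ≤ L) (H2 : b.1 ≤ L) (hn : n ≤ L)
    (E1 : (tr D H1).obj a.2 = (tr D hn).obj X)
    (E2 : (tr D H2).obj b.2 = (tr D hn).obj Y) : HRep D a b :=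
  ⟨L, H1, H2, eqToHom E1 ≫ (tr D hn).map f ≫ eqToHom E2.symm⟩

lemma conjRep_push {a b : Ob D} {n : ℕ} {X Y : D.obj n} (f : X ⟶ Y) (L : ℕ)
    (H1 : a.1 ≤ L) (H2 : b.1 ≤ L) (hn : n ≤ L)
    (E1 : (tr D H1).obj a.2 = (tr D hn).obj X)
    (E2 : (tr D H2).obj b.2 = (tr D hn).obj Y) {L'' : ℕ} (h : L ≤ L'') :
    pushHRep (conjRep a b f L H1 H2 hn E1 E2) h
      = conjRep a b f L'' (H1.trans h) (H2.trans h) (hn.trans h)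
          (conj_push_eq H1 hn E1 h) (conj_push_eq H2 hn E2 h) := by
  refine HRep.ext' rfl (heq_of_eq ?_)
  show eqToHom _ ≫ (tr D h).map (eqToHom E1 ≫ (tr D hn).map f ≫ eqToHom E2.symm)
        ≫ eqToHom _
      = eqToHom _ ≫ (tr D (hn.trans h)).map f ≫ eqToHom _
  simp only [Functor.map_comp, eqToHom_map, tr_map_tr, Category.assoc,
    eqToHom_trans, eqToHom_trans_assoc, eqToHom_refl, Category.id_comp, Category.comp_id]

lemma conjRep_class {a b : Ob D} {n : ℕ} {X Y : D.obj n} (f : X ⟶ Y) (L : ℕ)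
    (H1 : a.1 ≤ L) (H2 : b.1 ≤ L) (hn : n ≤ L)
    (E1 : (tr D H1).obj a.2 = (tr D hn).obj X)
    (E2 : (tr D H2).obj b.2 = (tr D hn).obj Y)
    (L' : ℕ) (H1' : a.1 ≤ L') (H2' : b.1 ≤ L') (hn' : n ≤ L')
    (E1' : (tr D H1').obj a.2 = (tr D hn').obj X)
    (E2' : (tr D H2').obj b.2 = (tr D hn').obj Y) :
    Quot.mk (hRel D a b) (conjRep a b f L H1 H2 hn E1 E2)
      = Quot.mk (hRel D a b) (conjRep a b f L' H1' H2' hn' E1' E2') := by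
  refine (sound_push _ (le_max_left L L')).trans
    (Eq.trans ?_ (sound_push _ (le_max_right L L')).symm)
  rw [conjRep_push, conjRep_push]

lemma conj_class_heq {q₁ q₁' q₂ q₂' : TOb D} (e₁ : q₁ = q₁') (e₂ : q₂ = q₂')
    {n : ℕ} {X Y : D.obj n} (f : X ⟶ Y)
    (L : ℕ) (H1 : (rp D q₁).1 ≤ L) (H2 : (rp D q₂).1 ≤ L) (hn : n ≤ L)
    (E1 : (tr D H1).obj (rp D q₁).2 = (tr D hn).obj X)
    (E2 : (tr D H2).obj (rp D q₂).2 = (tr D hn).obj Y)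
    (L' : ℕ) (H1' : (rp D q₁').1 ≤ L') (H2' : (rp D q₂').1 ≤ L') (hn' : n ≤ L')
    (E1' : (tr D H1').obj (rp D q₁').2 = (tr D hn').obj X)
    (E2' : (tr D H2').obj (rp D q₂').2 = (tr D hn').obj Y) :
    HEq (Quot.mk (hRel D (rp D q₁) (rp D q₂)) (conjRep _ _ f L H1 H2 hn E1 E2))
      (Quot.mk (hRel D (rp D q₁') (rp D q₂')) (conjRep _ _ f L' H1' H2' hn' E1' E2')) := by
  subst e₁; subst e₂
  exact heq_of_eq (conjRep_class f L H1 H2 hn E1 E2 L' H1' H2' hn' E1' E2')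

/-! ### The leg functors -/

@[reducible]
noncomputable def legRep (n : ℕ) {X Y : D.obj n} (f : X ⟶ Y) :
    HRep D (rp D (mkOb D n X)) (rp D (mkOb D n Y)) :=
  conjRep _ _ f (max (alevel ⟨n, X⟩) (alevel ⟨n, Y⟩))
    ((alev1 ⟨n, X⟩).trans (le_max_left _ _))
    ((alev1 ⟨n, Y⟩).trans (le_max_right _ _))
    ((alev2 ⟨n, X⟩).trans (le_max_left _ _))
    (align_at ⟨n, X⟩ (le_max_left _ _))
    (align_at ⟨n, Y⟩ (le_max_right _ _))

lemma conj_comp_class {a b c : Ob D} {n : ℕ} {X Y Z : D.obj n} (f : X ⟶ Y) (g : Y ⟶ Z)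
    (L : ℕ) (H1 : a.1 ≤ L) (H2 : b.1 ≤ L) (H3 : c.1 ≤ L) (hn : n ≤ L)
    (E1 : (tr D H1).obj a.2 = (tr D hn).obj X)
    (E2 : (tr D H2).obj b.2 = (tr D hn).obj Y)
    (E3 : (tr D H3).obj c.2 = (tr D hn).obj Z) :
    Quot.mk (hRel D a c) (compRep (conjRep a b f L H1 H2 hn E1 E2)
        (conjRep b c g L H2 H3 hn E2 E3) L (le_refl _) (le_refl _))
      = Quot.mk (hRel D a c) (conjRep a c (f ≫ g) L H1 H3 hn E1 E3) := by
  congr 1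
  refine HRep.ext' rfl (heq_of_eq ?_)
  show (pushHRep (conjRep a b f L H1 H2 hn E1 E2) (le_refl _)).f
      ≫ (pushHRep (conjRep b c g L H2 H3 hn E2 E3) (le_refl _)).f
    = (conjRep a c (f ≫ g) L H1 H3 hn E1 E3).f
  rw [pushf_refl, pushf_refl]
  show (eqToHom E1 ≫ (tr D hn).map f ≫ eqToHom E2.symm)
      ≫ (eqToHom E2 ≫ (tr D hn).map g ≫ eqToHom E3.symm)
    = eqToHom E1 ≫ (tr D hn).map (f ≫ g) ≫ eqToHom E3.symm
  simp

lemma leg_comp_aux (n : ℕ) {X Y Z : D.obj n} (f : X ⟶ Y) (g : Y ⟶ Z) :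
    Quot.mk (hRel D (rp D (mkOb D n X)) (rp D (mkOb D n Z)))
        (compRep (legRep n f) (legRep n g) (max (legRep n f).l (legRep n g).l)
          (le_max_left _ _) (le_max_right _ _))
      = Quot.mk _ (legRep n (f ≫ g)) := by
  set AX := alevel (D := D) ⟨n, X⟩
  set AY := alevel (D := D) ⟨n, Y⟩
  set AZ := alevel (D := D) ⟨n, Z⟩
  set L := max (max AX AY) AZ with hL
  have hAX : AX ≤ L := by omega
  have hAY : AY ≤ L := by omega
  have hAZ : AZ ≤ L := by omega
  have H1 : (rp D (mkOb D n X)).1 ≤ L := (alev1 ⟨n, X⟩).trans hAX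
  have H2 : (rp D (mkOb D n Y)).1 ≤ L := (alev1 ⟨n, Y⟩).trans hAY
  have H3 : (rp D (mkOb D n Z)).1 ≤ L := (alev1 ⟨n, Z⟩).trans hAZ
  have hn : n ≤ L := (alev2 ⟨n, X⟩).trans hAX
  have E1 : (tr D H1).obj (rp D (mkOb D n X)).2 = (tr D hn).obj X :=
    conj_push_eq (alev1 ⟨n, X⟩) (alev2 ⟨n, X⟩) (alev_eq ⟨n, X⟩) hAX
  have E2 : (tr D H2).obj (rp D (mkOb D n Y)).2 = (tr D hn).obj Y :=
    conj_push_eq (alev1 ⟨n, Y⟩) (alev2 ⟨n, Y⟩) (alev_eq ⟨n, Y⟩) hAY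
  have E3 : (tr D H3).obj (rp D (mkOb D n Z)).2 = (tr D hn).obj Z :=
    conj_push_eq (alev1 ⟨n, Z⟩) (alev2 ⟨n, Z⟩) (alev_eq ⟨n, Z⟩) hAZ
  have ef : Quot.mk (hRel D (rp D (mkOb D n X)) (rp D (mkOb D n Y))) (legRep n f)
      = Quot.mk _ (conjRep _ _ f L H1 H2 hn E1 E2) :=
    conjRep_class f _ _ _ _ _ _ L H1 H2 hn E1 E2
  have eg : Quot.mk (hRel D (rp D (mkOb D n Y)) (rp D (mkOb D n Z))) (legRep n g)
      = Quot.mk _ (conjRep _ _ g L H2 H3 hn E2 E3) :=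
    conjRep_class g _ _ _ _ _ _ L H2 H3 hn E2 E3
  have hlf : (legRep n f).l ≤ max L (max (legRep n f).l (legRep n g).l) := by omega
  have hlg : (legRep n g).l ≤ max L (max (legRep n f).l (legRep n g).l) := by omega
  have hLL : L ≤ max L (max (legRep n f).l (legRep n g).l) := by omega
  refine (compRep_class (legRep n f) (legRep n g) _ (le_max_left _ _) (le_max_right _ _)
    (max L (max (legRep n f).l (legRep n g).l)) hlf hlg).trans ?_
  refine (compRep_class_congr_left ef (legRep n g) _ hlf hlg hLL hlg).trans ?_
  refine (compRep_class_congr_right _ eg _ hLL hlg hLL hLL).trans ?_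
  refine (compRep_class _ _ _ hLL hLL L (le_refl _) (le_refl _)).trans ?_
  refine (conj_comp_class f g L H1 H2 H3 hn E1 E2 E3).trans ?_
  exact conjRep_class (f ≫ g) L H1 H3 hn E1 E3 _ _ _ _ _ _

@[reducible]
noncomputable def leg (n : ℕ) : (D.obj n : Cat.{v,u}) ⥤ TOb D where
  obj X := mkOb D n X
  map {X Y} f := Quot.mk _ (legRep n f)
  map_id X := by
    show Quot.mk _ (legRep n (𝟙 X)) = Quot.mk _ ⟨(rp D (mkOb D n X)).1, le_refl _, le_refl _, 𝟙 _⟩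
    set L := max (alevel ⟨n, X⟩) (alevel ⟨n, X⟩) with hLdef
    have hL : (rp D (mkOb D n X)).1 ≤ L := (alev1 ⟨n, X⟩).trans (le_max_left _ _)
    refine class_eq L (le_refl _) hL ?_
    erw [pushf_refl]
    show eqToHom _ ≫ (tr D _).map (𝟙 X) ≫ eqToHom _
        = eqToHom _ ≫ (tr D hL).map (𝟙 _) ≫ eqToHom _
    simp
    exact (eqToHom_trans _ _).trans (eqToHom_refl _ _)
  map_comp {X Y Z} f g := by
    show Quot.mk _ (legRep n (f ≫ g))
        = Quot.mk _ (compRep (legRep n f) (legRep n g) _ (le_max_left _ _) (le_max_right _ _))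
    exact (leg_comp_aux n f g).symm
/-! ### Cocone naturality of the legs -/

lemma conjRep_absorb {a b : Ob D} {n m : ℕ} (h : n ≤ m) {X Y : D.obj n}
    (f : X ⟶ Y) (L : ℕ) (H1 : a.1 ≤ L) (H2 : b.1 ≤ L) (hm : m ≤ L)
    (E1 : (tr D H1).obj a.2 = (tr D hm).obj ((tr D h).obj X))
    (E2 : (tr D H2).obj b.2 = (tr D hm).obj ((tr D h).obj Y)) :
    Quot.mk (hRel D a b) (conjRep a b ((tr D h).map f) L H1 H2 hm E1 E2)
      = Quot.mk (hRel D a b) (conjRep a b f L H1 H2 (h.trans hm)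
          (E1.trans (tr_obj_tr D h hm X)) (E2.trans (tr_obj_tr D h hm Y))) := by
  congr 1
  refine HRep.ext' rfl (heq_of_eq ?_)
  show eqToHom E1 ≫ (tr D hm).map ((tr D h).map f) ≫ eqToHom E2.symm
      = eqToHom _ ≫ (tr D (h.trans hm)).map f ≫ eqToHom _
  rw [tr_map_tr]
  simp

lemma leg_w {n m : ℕ} (h : n ≤ m) :
    (D.map (homOfLE h)).toFunctor ⋙ leg m = leg (D := D) n := by
  show tr D h ⋙ leg m = leg n
  refine CategoryTheory.Functor.hext (fun X => (mk_push D X h).symm) ?_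
  intro X Y f
  show HEq (Quot.mk _ (legRep m ((tr D h).map f))) (Quot.mk _ (legRep n f))
  refine (heq_of_eq (conjRep_absorb h f _ _ _ _ _ _)).trans ?_
  exact conj_class_heq (mk_push D X h).symm (mk_push D Y h).symm f _ _ _ _ _ _ _ _ _ _ _ _

variable (c : Cocone D)

/-! ### The comparison functor back -/

lemma iota_w_obj {n m : ℕ} (h : n ≤ m) (X : D.obj n) :
    (c.ι.app m).toFunctor.obj ((tr D h).obj X) = (c.ι.app n).toFunctor.obj X :=
  Functor.congr_obj (congrArg Cat.Hom.toFunctor (c.w (homOfLE h))) X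

lemma iota_w_map {n m : ℕ} (h : n ≤ m) {X Y : D.obj n} (f : X ⟶ Y) :
    (c.ι.app m).toFunctor.map ((tr D h).map f)
      = eqToHom (iota_w_obj c h X) ≫ (c.ι.app n).toFunctor.map f ≫ eqToHom (iota_w_obj c h Y).symm :=
  Functor.congr_hom (congrArg Cat.Hom.toFunctor (c.w (homOfLE h))) f

def PsiObj : TOb D → (c.pt : Cat.{v,u}) :=
  Quot.lift (fun a => (c.ι.app a.1).toFunctor.obj a.2)
    (by
      rintro a b hb
      subst hb
      exact (iota_w_obj c (Nat.le_succ a.1) a.2).symm)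

lemma PsiObj_rp (q : TOb D) {L : ℕ} (h : (rp D q).1 ≤ L) :
    PsiObj c q = (c.ι.app L).toFunctor.obj ((tr D h).obj (rp D q).2) :=
  (congrArg (PsiObj c) (rp_spec D q)).symm.trans (iota_w_obj c h (rp D q).2).symm

noncomputable def PsiMap {q₁ q₂ : TOb D} (φ : q₁ ⟶ q₂) :
    PsiObj c q₁ ⟶ PsiObj c q₂ :=
  Quot.lift (fun r : HRep D (rp D q₁) (rp D q₂) =>
      eqToHom (PsiObj_rp c q₁ r.h1) ≫ (c.ι.app r.l).toFunctor.map r.f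
        ≫ eqToHom (PsiObj_rp c q₂ r.h2).symm)
    (by
      rintro r r' ⟨h, hr'⟩
      rw [hr']
      show _ = eqToHom _ ≫ (c.ι.app _).toFunctor.map
          (eqToHom _ ≫ (tr D h).map r.f ≫ eqToHom _) ≫ eqToHom _
      simp only [Functor.map_comp, eqToHom_map, iota_w_map, Category.assoc,
        eqToHom_trans, eqToHom_trans_assoc, eqToHom_refl, Category.id_comp,
        Category.comp_id]) φ

lemma PsiMap_mk {q₁ q₂ : TOb D} (r : HRep D (rp D q₁) (rp D q₂)) :
    PsiMap c (Quot.mk _ r : q₁ ⟶ q₂)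
      = eqToHom (PsiObj_rp c q₁ r.h1) ≫ (c.ι.app r.l).toFunctor.map r.f
          ≫ eqToHom (PsiObj_rp c q₂ r.h2).symm := rfl

lemma PsiObj_conj (q : TOb D) {L n : ℕ} {X : D.obj n} (H : (rp D q).1 ≤ L) (hn : n ≤ L)
    (E : (tr D H).obj (rp D q).2 = (tr D hn).obj X) :
    PsiObj c q = (c.ι.app n).toFunctor.obj X :=
  (PsiObj_rp c q H).trans ((congrArg (c.ι.app L).toFunctor.obj E).trans (iota_w_obj c hn X))

lemma PsiMap_conj {q₁ q₂ : TOb D} {n : ℕ} {X Y : D.obj n} (f : X ⟶ Y)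
    (L : ℕ) (H1 : (rp D q₁).1 ≤ L) (H2 : (rp D q₂).1 ≤ L) (hn : n ≤ L)
    (E1 : (tr D H1).obj (rp D q₁).2 = (tr D hn).obj X)
    (E2 : (tr D H2).obj (rp D q₂).2 = (tr D hn).obj Y) :
    PsiMap c (Quot.mk _ (conjRep _ _ f L H1 H2 hn E1 E2) : q₁ ⟶ q₂)
      = eqToHom (PsiObj_conj c q₁ H1 hn E1) ≫ (c.ι.app n).toFunctor.map f
          ≫ eqToHom (PsiObj_conj c q₂ H2 hn E2).symm := by
  rw [PsiMap_mk]
  show eqToHom _ ≫ (c.ι.app L).toFunctor.map (eqToHom E1 ≫ (tr D hn).map f ≫ eqToHom E2.symm)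
      ≫ eqToHom _ = _
  simp only [Functor.map_comp, eqToHom_map, iota_w_map, Category.assoc,
    eqToHom_trans, eqToHom_trans_assoc, eqToHom_refl, Category.id_comp, Category.comp_id]

@[reducible]
noncomputable def Psi : (TOb D) ⥤ (c.pt : Cat.{v,u}) where
  obj := PsiObj c
  map := PsiMap c
  map_id q := by
    show PsiMap c (Quot.mk _ (⟨(rp D q).1, le_refl _, le_refl _, 𝟙 _⟩ : HRep D (rp D q) (rp D q)))
      = 𝟙 (PsiObj c q)
    rw [PsiMap_mk]
    simp
  map_comp {q₁ q₂ q₃} φ ψ := by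
    induction φ using Quot.ind with | _ r =>
    induction ψ using Quot.ind with | _ s =>
    show PsiMap c (Quot.mk _ (compRep r s _ (le_max_left _ _) (le_max_right _ _)) : q₁ ⟶ q₃)
      = PsiMap c (Quot.mk _ r : q₁ ⟶ q₂) ≫ PsiMap c (Quot.mk _ s : q₂ ⟶ q₃)
    rw [PsiMap_mk, PsiMap_mk, PsiMap_mk]
    show eqToHom _ ≫ (c.ι.app _).toFunctor.map
        ((eqToHom _ ≫ (tr D _).map r.f ≫ eqToHom _)
          ≫ (eqToHom _ ≫ (tr D _).map s.f ≫ eqToHom _)) ≫ eqToHom _ = _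
    simp only [Functor.map_comp, eqToHom_map, iota_w_map, Category.assoc,
      eqToHom_trans, eqToHom_trans_assoc, eqToHom_refl, Category.id_comp,
      Category.comp_id]

lemma leg_Psi (n : ℕ) : leg n ⋙ Psi c = (c.ι.app n).toFunctor := by
  refine CategoryTheory.Functor.hext (fun X => rfl) ?_
  intro X Y f
  refine heq_of_eq ?_
  show PsiMap c (Quot.mk _ (legRep n f)) = (c.ι.app n).toFunctor.map f
  refine Eq.trans (PsiMap_conj (q₁ := mkOb D n X) (q₂ := mkOb D n Y) c f
    (max (alevel ⟨n, X⟩) (alevel ⟨n, Y⟩))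
    ((alev1 ⟨n, X⟩).trans (le_max_left _ _))
    ((alev1 ⟨n, Y⟩).trans (le_max_right _ _))
    ((alev2 ⟨n, X⟩).trans (le_max_left _ _))
    (align_at ⟨n, X⟩ (le_max_left _ _))
    (align_at ⟨n, Y⟩ (le_max_right _ _))) ?_
  erw [eqToHom_refl, eqToHom_refl, Category.id_comp, Category.comp_id]

/-! ### The diagram cocone on the colimit model -/

noncomputable def tcocone : Cocone D where
  pt := Cat.of (TOb D)
  ι := { app := fun n => (leg n).toCatHom
         naturality := fun n m f => by
           have hf : f = homOfLE (leOfHom f) := rfl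
           show D.map f ≫ (leg m).toCatHom = (leg n).toCatHom ≫ 𝟙 (Cat.of (TOb D))
           rw [Category.comp_id, hf]
           exact Cat.Hom.ext (leg_w (leOfHom f)) }

variable (hc : IsColimit c)

noncomputable def Theta : (c.pt : Cat.{v,u}) ⥤ TOb D := (hc.desc (tcocone (D := D))).toFunctor

lemma iota_Theta (n : ℕ) : (c.ι.app n).toFunctor ⋙ Theta c hc = leg n :=
  congrArg Cat.Hom.toFunctor (hc.fac (tcocone (D := D)) n)

noncomputable def PsiC : (tcocone (D := D)).pt ⟶ c.pt := (Psi c).toCatHom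

lemma Theta_Psi : Theta c hc ⋙ Psi c = 𝟭 (c.pt : Cat.{v,u}) := by
  have key : (hc.desc (tcocone (D := D)) ≫ PsiC c : c.pt ⟶ c.pt) = 𝟙 c.pt := by
    refine hc.hom_ext ?_
    intro n
    have e1 : c.ι.app n ≫ 𝟙 c.pt = c.ι.app n := Category.comp_id _
    rw [e1, ← Category.assoc, hc.fac]
    show (leg n).toCatHom ≫ PsiC c = c.ι.app n
    exact Cat.Hom.ext (leg_Psi c n)
  exact congrArg Cat.Hom.toFunctor key
/-! ### Fullness and faithfulness -/

section FF

lemma tr_faithful (hqFf : ∀ k, (D.map (homOfLE (Nat.le_succ k))).toFunctor.Faithful)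
    {n m : ℕ} (h : n ≤ m) : (tr D h).Faithful := by
  induction m, h using Nat.le_induction with
  | base =>
      rw [tr_refl]
      infer_instance
  | succ m hm ih =>
      show (tr D (hm.trans (Nat.le_succ m))).Faithful
      rw [← tr_tr D hm (Nat.le_succ m)]
      haveI := ih
      haveI : (tr D (Nat.le_succ m)).Faithful := hqFf m
      infer_instance

lemma tr_full (hqF : ∀ k, (D.map (homOfLE (Nat.le_succ k))).toFunctor.Full)
    {n m : ℕ} (h : n ≤ m) : (tr D h).Full := by
  induction m, h using Nat.le_induction with
  | base =>
      rw [tr_refl]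
      infer_instance
  | succ m hm ih =>
      show (tr D (hm.trans (Nat.le_succ m))).Full
      rw [← tr_tr D hm (Nat.le_succ m)]
      haveI := ih
      haveI : (tr D (Nat.le_succ m)).Full := hqF m
      infer_instance

lemma conjRep_inj {a b : Ob D} {n : ℕ} {X Y : D.obj n} {f g : X ⟶ Y} {L : ℕ}
    {H1 : a.1 ≤ L} {H2 : b.1 ≤ L} {hn : n ≤ L}
    {E1 : (tr D H1).obj a.2 = (tr D hn).obj X}
    {E2 : (tr D H2).obj b.2 = (tr D hn).obj Y}
    {H1' : a.1 ≤ L} {H2' : b.1 ≤ L} {hn' : n ≤ L}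
    {E1' : (tr D H1').obj a.2 = (tr D hn').obj X}
    {E2' : (tr D H2').obj b.2 = (tr D hn').obj Y}
    (e : conjRep a b f L H1 H2 hn E1 E2 = conjRep a b g L H1' H2' hn' E1' E2') :
    (tr D hn).map f = (tr D hn).map g := by
  have e2 := eq_of_heq (HRep.f_heq (r := conjRep a b f L H1 H2 hn E1 E2)
    (r' := conjRep a b g L H1' H2' hn' E1' E2') e)
  have e3 := congrArg (fun t => eqToHom E1.symm ≫ t ≫ eqToHom E2) e2
  show (tr D hn).map f = (tr D hn).map g
  simpa [conjRep] using e3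

lemma leg_faithful (hqFf : ∀ k, (D.map (homOfLE (Nat.le_succ k))).toFunctor.Faithful)
    (n : ℕ) : (leg (D := D) n).Faithful := by
  constructor
  intro X Y f g hfg
  have hfg' : Quot.mk (hRel D (rp D (mkOb D n X)) (rp D (mkOb D n Y))) (legRep n f)
      = Quot.mk _ (legRep n g) := hfg
  obtain ⟨L, hf, hg, e⟩ := thom_exact hfg'
  have ef := conjRep_push (a := rp D (mkOb D n X)) (b := rp D (mkOb D n Y)) f
    (max (alevel ⟨n, X⟩) (alevel ⟨n, Y⟩))
    ((alev1 ⟨n, X⟩).trans (le_max_left _ _))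
    ((alev1 ⟨n, Y⟩).trans (le_max_right _ _))
    ((alev2 ⟨n, X⟩).trans (le_max_left _ _))
    (align_at ⟨n, X⟩ (le_max_left _ _))
    (align_at ⟨n, Y⟩ (le_max_right _ _)) hf
  have eg := conjRep_push (a := rp D (mkOb D n X)) (b := rp D (mkOb D n Y)) g
    (max (alevel ⟨n, X⟩) (alevel ⟨n, Y⟩))
    ((alev1 ⟨n, X⟩).trans (le_max_left _ _))
    ((alev1 ⟨n, Y⟩).trans (le_max_right _ _))
    ((alev2 ⟨n, X⟩).trans (le_max_left _ _))
    (align_at ⟨n, X⟩ (le_max_left _ _))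
    (align_at ⟨n, Y⟩ (le_max_right _ _)) hg
  have e' := ef.symm.trans (e.trans eg)
  have e'' := conjRep_inj e'
  haveI := tr_faithful hqFf (show n ≤ L from ((alev2 ⟨n, X⟩).trans (le_max_left _ _)).trans hf)
  exact (tr D (show n ≤ L from ((alev2 ⟨n, X⟩).trans (le_max_left _ _)).trans hf)).map_injective e''

lemma leg_full (hqF : ∀ k, (D.map (homOfLE (Nat.le_succ k))).toFunctor.Full)
    (hqFf : ∀ k, (D.map (homOfLE (Nat.le_succ k))).toFunctor.Faithful)
    (n : ℕ) : (leg (D := D) n).Full := by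
  constructor
  intro X Y φ
  obtain ⟨r, hrφ⟩ := Quot.exists_rep φ
  set L := max r.l (max (alevel ⟨n, X⟩) (alevel ⟨n, Y⟩)) with hLdef
  have hrL : r.l ≤ L := le_max_left _ _
  have hAX : alevel (D := D) ⟨n, X⟩ ≤ L := (le_max_left _ _).trans (le_max_right _ _)
  have hAY : alevel (D := D) ⟨n, Y⟩ ≤ L := (le_max_right _ _).trans (le_max_right _ _)
  have hn : n ≤ L := (alev2 ⟨n, X⟩).trans hAX
  have H1 : (rp D (mkOb D n X)).1 ≤ L := (alev1 ⟨n, X⟩).trans hAX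
  have H2 : (rp D (mkOb D n Y)).1 ≤ L := (alev1 ⟨n, Y⟩).trans hAY
  have E1 : (tr D H1).obj (rp D (mkOb D n X)).2 = (tr D hn).obj X :=
    conj_push_eq (alev1 ⟨n, X⟩) (alev2 ⟨n, X⟩) (alev_eq ⟨n, X⟩) hAX
  have E2 : (tr D H2).obj (rp D (mkOb D n Y)).2 = (tr D hn).obj Y :=
    conj_push_eq (alev1 ⟨n, Y⟩) (alev2 ⟨n, Y⟩) (alev_eq ⟨n, Y⟩) hAY
  haveI := tr_full hqF hn
  haveI := tr_faithful hqFf hn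
  set g' : (tr D hn).obj X ⟶ (tr D hn).obj Y
    := eqToHom E1.symm ≫ (pushHRep r hrL).f ≫ eqToHom E2 with hg'
  refine ⟨(tr D hn).preimage g', ?_⟩
  show Quot.mk _ (legRep n ((tr D hn).preimage g')) = φ
  refine Eq.trans (conjRep_class _ _ _ _ _ _ _ L H1 H2 hn E1 E2) ?_
  refine Eq.trans ?_ ((sound_push r hrL).symm.trans hrφ)
  congr 1
  refine HRep.ext' rfl (heq_of_eq ?_)
  show eqToHom E1 ≫ (tr D hn).map ((tr D hn).preimage g') ≫ eqToHom E2.symm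
      = (pushHRep r hrL).f
  rw [Functor.map_preimage, hg']
  simp

end FF
/-! ### Consequences on the colimit cocone -/

section Conseq

variable (hc : IsColimit c)

lemma PsiObj_Theta (A : c.pt) : PsiObj c ((Theta c hc).obj A) = A :=
  Functor.congr_obj (Theta_Psi c hc) A

lemma obj_surj (hc : IsColimit c) (A : c.pt) : ∃ (n : ℕ) (X : D.obj n), (c.ι.app n).toFunctor.obj X = A := by
  obtain ⟨a, ha⟩ := Quot.exists_rep ((Theta c hc).obj A)
  refine ⟨a.1, a.2, ?_⟩
  calc (c.ι.app a.1).toFunctor.obj a.2 = PsiObj c (Quot.mk _ a) := rfl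
    _ = PsiObj c ((Theta c hc).obj A) := congrArg (PsiObj c) ha
    _ = A := PsiObj_Theta c hc A

lemma theta_obj_iota (n : ℕ) (X : D.obj n) :
    (Theta c hc).obj ((c.ι.app n).toFunctor.obj X) = mkOb D n X :=
  Functor.congr_obj (iota_Theta c hc n) X

lemma hom_to_iota (hc : IsColimit c) {n m : ℕ} (X : D.obj n) (Y : D.obj m)
    (g : (c.ι.app n).toFunctor.obj X ⟶ (c.ι.app m).toFunctor.obj Y) :
    ∃ (L : ℕ) (hn : n ≤ L) (hm : m ≤ L) (f : (tr D hn).obj X ⟶ (tr D hm).obj Y),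
      g = eqToHom (iota_w_obj c hn X).symm ≫ (c.ι.app L).toFunctor.map f ≫ eqToHom (iota_w_obj c hm Y) := by
  have eX := theta_obj_iota c hc n X
  have eY := theta_obj_iota c hc m Y
  set φ' : mkOb D n X ⟶ mkOb D m Y :=
    eqToHom eX.symm ≫ (Theta c hc).map g ≫ eqToHom eY with hφ'def
  obtain ⟨r, hr⟩ := Quot.exists_rep φ'
  set L := max r.l (max (alevel ⟨n, X⟩) (alevel ⟨m, Y⟩)) with hLdef
  have hrL : r.l ≤ L := le_max_left _ _
  have hAX : alevel (D := D) ⟨n, X⟩ ≤ L := (le_max_left _ _).trans (le_max_right _ _)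
  have hAY : alevel (D := D) ⟨m, Y⟩ ≤ L := (le_max_right _ _).trans (le_max_right _ _)
  have hn : n ≤ L := (alev2 ⟨n, X⟩).trans hAX
  have hm : m ≤ L := (alev2 ⟨m, Y⟩).trans hAY
  have H1 : (rp D (mkOb D n X)).1 ≤ L := (alev1 ⟨n, X⟩).trans hAX
  have H2 : (rp D (mkOb D m Y)).1 ≤ L := (alev1 ⟨m, Y⟩).trans hAY
  have E1 : (tr D H1).obj (rp D (mkOb D n X)).2 = (tr D hn).obj X :=
    conj_push_eq (alev1 ⟨n, X⟩) (alev2 ⟨n, X⟩) (alev_eq ⟨n, X⟩) hAX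
  have E2 : (tr D H2).obj (rp D (mkOb D m Y)).2 = (tr D hm).obj Y :=
    conj_push_eq (alev1 ⟨m, Y⟩) (alev2 ⟨m, Y⟩) (alev_eq ⟨m, Y⟩) hAY
  refine ⟨L, hn, hm, eqToHom E1.symm ≫ (pushHRep r hrL).f ≫ eqToHom E2, ?_⟩
  -- compute Psi of φ'
  have hφc : φ' = Quot.mk _ (pushHRep r hrL) := hr.symm.trans (sound_push r hrL)
  have hPsi : PsiMap c φ' = eqToHom (PsiObj_rp c _ (pushHRep r hrL).h1)
      ≫ (c.ι.app L).toFunctor.map (pushHRep r hrL).f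
      ≫ eqToHom (PsiObj_rp c _ (pushHRep r hrL).h2).symm := by
    rw [hφc]; exact PsiMap_mk c _
  -- express g via Theta_Psi
  have hg := Functor.congr_hom (Theta_Psi c hc) g
  -- hg : PsiMap c ((Theta c hc).map g) = eqToHom _ ≫ g ≫ eqToHom _
  have hTm : (Theta c hc).map g = eqToHom eX ≫ φ' ≫ eqToHom eY.symm := by
    rw [hφ'def]; simp
  rw [Functor.comp_map, Functor.id_map] at hg
  rw [hTm] at hg
  have hPeq : (Psi c).map (eqToHom eX ≫ φ' ≫ eqToHom eY.symm)
      = (Psi c).map (eqToHom eX) ≫ (Psi c).map φ' ≫ (Psi c).map (eqToHom eY.symm) := by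
    rw [← Functor.map_comp, ← Functor.map_comp]
  rw [hPeq, eqToHom_map, eqToHom_map] at hg
  -- hg : eqToHom _ ≫ Psi φ' ≫ eqToHom _ = eqToHom _ ≫ g ≫ eqToHom _
  have : (Psi c).map φ' = PsiMap c φ' := rfl
  rw [this, hPsi] at hg
  -- now solve for g
  have hgfin := congrArg (fun t => eqToHom (Functor.congr_obj (Theta_Psi c hc)
      ((c.ι.app n).toFunctor.obj X)).symm ≫ t ≫ eqToHom (Functor.congr_obj (Theta_Psi c hc)
      ((c.ι.app m).toFunctor.obj Y))) hg
  simp only [Category.assoc, eqToHom_trans, eqToHom_trans_assoc, eqToHom_refl,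
    Category.id_comp, Category.comp_id] at hgfin
  refine Eq.trans hgfin.symm ?_
  simp only [Functor.map_comp, eqToHom_map, Category.assoc, eqToHom_trans,
    eqToHom_trans_assoc, eqToHom_refl, Category.id_comp, Category.comp_id]

end Conseq
/-! ### The composite right adjoints -/

noncomputable def K (G : ∀ k : ℕ, (D.obj (k+1) : Cat.{v,u}) ⥤ (D.obj k : Cat.{v,u})) :
    ∀ n : ℕ, (D.obj n : Cat.{v,u}) ⥤ (D.obj 0 : Cat.{v,u})
  | 0 => 𝟭 _
  | (n+1) => G n ⋙ K G n

noncomputable def adjK (G : ∀ k : ℕ, (D.obj (k+1) : Cat.{v,u}) ⥤ (D.obj k : Cat.{v,u}))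
    (adjG : ∀ k, (D.map (homOfLE (Nat.le_succ k))).toFunctor ⊣ G k) :
    ∀ n : ℕ, tr D (Nat.zero_le n) ⊣ K G n
  | 0 => (Adjunction.id (C := (D.obj 0 : Cat.{v,u}))).ofNatIsoLeft
      (eqToIso (tr_refl D 0).symm)
  | (n+1) => ((adjK G adjG n).comp (adjG n)).ofNatIsoLeft
      (eqToIso (tr_tr D (Nat.zero_le n) (Nat.le_succ n)))

section Final

variable (hqF : ∀ k, (D.map (homOfLE (Nat.le_succ k))).toFunctor.Full)
variable (hqFf : ∀ k, (D.map (homOfLE (Nat.le_succ k))).toFunctor.Faithful)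

lemma iota_faithful (hqFf : ∀ k, (D.map (homOfLE (Nat.le_succ k))).toFunctor.Faithful)
    (hc : IsColimit c) (n : ℕ) :
    ((c.ι.app n).toFunctor).Faithful := by
  haveI h1 : ((c.ι.app n).toFunctor ⋙ Theta c hc).Faithful := by
    rw [iota_Theta c hc n]
    exact leg_faithful hqFf n
  exact Functor.Faithful.of_comp (F := (c.ι.app n).toFunctor)
    (G := Theta c hc)

lemma Theta_faithful (hc : IsColimit c) : (Theta c hc).Faithful := by
  haveI h1 : (Theta c hc ⋙ Psi c).Faithful := by
    rw [Theta_Psi c hc]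
    infer_instance
  exact Functor.Faithful.of_comp (F := Theta c hc) (G := Psi c)

lemma iota_full (hqF : ∀ k, (D.map (homOfLE (Nat.le_succ k))).toFunctor.Full)
    (hqFf : ∀ k, (D.map (homOfLE (Nat.le_succ k))).toFunctor.Faithful)
    (hc : IsColimit c) (n : ℕ) :
    ((c.ι.app n).toFunctor).Full := by
  haveI h1 : ((c.ι.app n).toFunctor ⋙ Theta c hc).Full := by
    rw [iota_Theta c hc n]
    exact leg_full hqF hqFf n
  haveI := Theta_faithful c hc
  exact Functor.Full.of_comp_faithful (F := (c.ι.app n).toFunctor)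
    (G := Theta c hc)

lemma hasTerm (hqF : ∀ k, (D.map (homOfLE (Nat.le_succ k))).toFunctor.Full)
    (hqFf : ∀ k, (D.map (homOfLE (Nat.le_succ k))).toFunctor.Faithful)
    (hc : IsColimit c)
    (G : ∀ k : ℕ, (D.obj (k+1) : Cat.{v,u}) ⥤ (D.obj k : Cat.{v,u}))
    (adjG : ∀ k, (D.map (homOfLE (Nat.le_succ k))).toFunctor ⊣ G k)
    (n : ℕ) (X : D.obj n) :
    HasTerminal (CostructuredArrow (c.ι.app 0).toFunctor
      ((c.ι.app n).toFunctor.obj X)) := by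
  haveI := iota_faithful c hqFf hc n
  set adj := adjK G adjG n with hadj
  set KX := (K G n).obj X with hKX
  set eps : (c.ι.app 0).toFunctor.obj KX ⟶ (c.ι.app n).toFunctor.obj X :=
    eqToHom (iota_w_obj c (Nat.zero_le n) KX).symm ≫ (c.ι.app n).toFunctor.map (adj.counit.app X)
    with heps
  have Tfact : ∀ (W : D.obj 0) (u : W ⟶ KX), (c.ι.app 0).toFunctor.map u ≫ eps
      = eqToHom (iota_w_obj c (Nat.zero_le n) W).symm
        ≫ (c.ι.app n).toFunctor.map ((tr D (Nat.zero_le n)).map u ≫ adj.counit.app X) := by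
    intro W u
    have h1 := iota_w_map c (Nat.zero_le n) u
    rw [heps, Functor.map_comp]
    rw [show (c.ι.app 0).toFunctor.map u
        = eqToHom (iota_w_obj c (Nat.zero_le n) W).symm
          ≫ (c.ι.app n).toFunctor.map ((tr D (Nat.zero_le n)).map u)
          ≫ eqToHom (iota_w_obj c (Nat.zero_le n) KX) by rw [h1]; simp]
    simp
  set t : CostructuredArrow (c.ι.app 0).toFunctor
      ((c.ι.app n).toFunctor.obj X) := CostructuredArrow.mk eps with ht
  haveI hne : ∀ s, Nonempty (s ⟶ t) := by
    intro s
    obtain ⟨L, h0, hnL, f, hf⟩ := hom_to_iota c hc s.left X s.hom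
    have e0 : (tr D h0).obj s.left = (tr D hnL).obj ((tr D (Nat.zero_le n)).obj s.left) :=
      (tr_obj_tr D (Nat.zero_le n) hnL s.left).symm
    haveI := tr_full hqF hnL
    haveI := tr_faithful hqFf hnL
    set f'' : (tr D (Nat.zero_le n)).obj s.left ⟶ X
      := (tr D hnL).preimage (eqToHom e0.symm ≫ f) with hf''
    set u : s.left ⟶ KX := (adj.homEquiv s.left X) f'' with hu
    refine ⟨CostructuredArrow.homMk u ?_⟩
    show (c.ι.app 0).toFunctor.map u ≫ eps = s.hom
    rw [Tfact]
    have hcu : (tr D (Nat.zero_le n)).map u ≫ adj.counit.app X = f'' := by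
      have h6 : (adj.homEquiv s.left X).symm u
          = (tr D (Nat.zero_le n)).map u ≫ adj.counit.app X := adj.homEquiv_counit _ _ _
      rw [← h6, hu]
      exact (adj.homEquiv s.left X).symm_apply_apply f''
    rw [hcu, hf]
    have hmap : (tr D hnL).map f'' = eqToHom e0.symm ≫ f := Functor.map_preimage _ _
    have h2 := iota_w_map c hnL f''
    have h4 : (c.ι.app n).toFunctor.map f''
        = eqToHom (iota_w_obj c hnL _).symm ≫ (c.ι.app L).toFunctor.map ((tr D hnL).map f'')
          ≫ eqToHom (iota_w_obj c hnL X) := by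
      rw [h2]; simp
    rw [h4, hmap, Functor.map_comp, eqToHom_map]
    simp only [Category.assoc, eqToHom_trans, eqToHom_trans_assoc, eqToHom_refl,
      Category.id_comp, Category.comp_id]
  haveI hss : ∀ s, Subsingleton (s ⟶ t) := by
    intro s
    constructor
    intro a b
    apply CostructuredArrow.hom_ext
    have wa : (c.ι.app 0).toFunctor.map a.left ≫ eps = s.hom := CostructuredArrow.w a
    have wb : (c.ι.app 0).toFunctor.map b.left ≫ eps = s.hom := CostructuredArrow.w b
    rw [Tfact] at wa wb
    have e1 : (c.ι.app n).toFunctor.map ((tr D (Nat.zero_le n)).map a.left ≫ adj.counit.app X)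
        = (c.ι.app n).toFunctor.map ((tr D (Nat.zero_le n)).map b.left ≫ adj.counit.app X) := by
      have := wa.trans wb.symm
      have h5 := congrArg (fun t => eqToHom (iota_w_obj c (Nat.zero_le n) s.left) ≫ t) this
      simpa using h5
    have e2 := (c.ι.app n).toFunctor.map_injective e1
    have h6a : (adj.homEquiv s.left X).symm a.left
        = (tr D (Nat.zero_le n)).map a.left ≫ adj.counit.app X := adj.homEquiv_counit _ _ _
    have h6b : (adj.homEquiv s.left X).symm b.left
        = (tr D (Nat.zero_le n)).map b.left ≫ adj.counit.app X := adj.homEquiv_counit _ _ _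
    refine (adj.homEquiv s.left X).symm.injective ?_
    rw [h6a, h6b]
    exact e2
  exact hasTerminal_of_unique t

theorem main (hc : IsColimit c)
    (G : ∀ k : ℕ, (D.obj (k+1) : Cat.{v,u}) ⥤ (D.obj k : Cat.{v,u}))
    (adjG : ∀ k, (D.map (homOfLE (Nat.le_succ k))).toFunctor ⊣ G k)
    (hqF : ∀ k, (D.map (homOfLE (Nat.le_succ k))).toFunctor.Full)
    (hqFf : ∀ k, (D.map (homOfLE (Nat.le_succ k))).toFunctor.Faithful) :
    (c.ι.app 0).toFunctor.Full ∧ (c.ι.app 0).toFunctor.Faithful ∧ (c.ι.app 0).toFunctor.IsLeftAdjoint := by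
  refine ⟨iota_full c hqF hqFf hc 0, iota_faithful c hqFf hc 0, ?_⟩
  haveI : ∀ A : (c.pt : Cat.{v,u}), HasTerminal (CostructuredArrow
      (c.ι.app 0).toFunctor A) := by
    intro A
    obtain ⟨n, X, hA⟩ := obj_surj c hc A
    subst hA
    exact hasTerm c hqF hqFf hc G adjG n X
  exact isLeftAdjoint_of_costructuredArrowTerminals _

end Final
end S18



theorem stmt18 (D : ℕ ⥤ Cat) (c : Cocone D) (hc : IsColimit c)
    (h : ∀ n : ℕ,
      (D.map (homOfLE (Nat.le_succ n))).toFunctor.Full ∧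
      (D.map (homOfLE (Nat.le_succ n))).toFunctor.Faithful ∧
      ∃ (G : (D.obj (n + 1) : Cat) ⥤ (D.obj n : Cat))
        (_ : (D.map (homOfLE (Nat.le_succ n))).toFunctor ⊣ G),
        Nonempty (((D.map (homOfLE (Nat.le_succ n))).toFunctor ⋙ G) ≅ 𝟭 (D.obj n))) :
    (c.ι.app 0).toFunctor.Full ∧ (c.ι.app 0).toFunctor.Faithful ∧ (c.ι.app 0).toFunctor.IsLeftAdjoint := by
  exact S18.main (D := D) c hc (fun k => (h k).2.2.choose)
    (fun k => (h k).2.2.choose_spec.choose)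
    (fun k => (h k).1) (fun k => (h k).2.1)
end
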